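/- arXiv:2205.10302 — 11 statements merged into one kernel-verified Lean document; each statement's English description precedes it below -/
import Mathlib

section
/- Let S be a finite set of nonnegative reals, and for i = 1,…,n let f_i : S → [0,1] with ∑_{x∈S} f_i(x) = 1 (probability mass functions). If p : S → [0,1] satisfies ∑_{i=1}^n ∑_{x∈S} f_i(x)·p(x) ≤ 1 and p(x) ≤ 1 for all x, then the function q defined by q(x) = p(x)/2 satisfies, for every x ∈ S and every permutation π of {1,…,n}: q(x) + ∑_{k=1}^{n-1} ∑_{y∈S} f_{π(k)}(y)·q(y) ≤ 1. -/
open Finset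

/-- Halving a feasible offline-relaxation solution gives a feasible
online IIF solution, for every arrival ordering π. -/
theorem stmt_0 (n : ℕ) (S : Finset ℝ) (hS : ∀ x ∈ S, 0 ≤ x)
    (f : Fin n → ℝ → ℝ)
    (hf01 : ∀ i, ∀ x ∈ S, 0 ≤ f i x ∧ f i x ≤ 1)
    (hfsum : ∀ i, ∑ x ∈ S, f i x = 1)
    (p : ℝ → ℝ)
    (hp01 : ∀ x ∈ S, 0 ≤ p x ∧ p x ≤ 1)
    (hfeas : ∑ i : Fin n, ∑ x ∈ S, f i x * p x ≤ 1) :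
    ∀ x ∈ S, ∀ π : Equiv.Perm (Fin n),
      p x / 2 +
        ∑ k ∈ Finset.univ.filter (fun k : Fin n => (k : ℕ) < n - 1),
          ∑ y ∈ S, f (π k) y * (p y / 2) ≤ 1 := by
  intro x hx π
  have h1 : ∑ k ∈ Finset.univ.filter (fun k : Fin n => (k : ℕ) < n - 1),
      ∑ y ∈ S, f (π k) y * (p y / 2) ≤
      ∑ k : Fin n, ∑ y ∈ S, f (π k) y * (p y / 2) := by
    apply Finset.sum_le_sum_of_subset_of_nonneg (Finset.filter_subset _ _)
    intro k _ _
    apply Finset.sum_nonneg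
    intro y hy
    have := (hf01 (π k) y hy).1
    have := (hp01 y hy).1
    positivity
  have h2 : ∑ k : Fin n, ∑ y ∈ S, f (π k) y * (p y / 2) =
      (∑ i : Fin n, ∑ y ∈ S, f i y * p y) / 2 := by
    rw [Equiv.sum_comp π (fun i => ∑ y ∈ S, f i y * (p y / 2)),
      Finset.sum_div]
    congr 1; ext i
    rw [Finset.sum_div]
    congr 1; ext y; ring
  have h3 := (hp01 x hx).2
  linarith
end

section
/- Let S be a finite set of nonnegative reals, f_i : S → [0,1] pmfs for i = 1,…,n, and fix a permutation π of {1,…,n}. Suppose p : {1,…,n} × S → [0,1] satisfies p(i,x) + ∑_{k≠i} ∑_{y∈S} f_k(y)·p(k,y) ≤ 1 for all i ∈ {1,…,n} and x ∈ S. Then for every t ∈ {1,…,n} and every x ∈ S: p(π(t), x) ≤ 1 − ∑_{k=1}^{t-1} ∑_{y∈S} f_{π(k)}(y)·p(π(k), y). Conversely, if the latter family of inequalities holds for all permutations π, all t, and all x, then the former inequalities hold. -/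
open Finset

/-- Equivalence of the permutation-free TIF constraints and the
permutation-dependent "reaching probability" constraints
(core of the TIF Structural Lemma). -/
theorem stmt_2 (n : ℕ) (S : Finset ℝ) (hS : ∀ x ∈ S, 0 ≤ x)
    (f : Fin n → ℝ → ℝ)
    (hf01 : ∀ i, ∀ x ∈ S, 0 ≤ f i x ∧ f i x ≤ 1)
    (hfsum : ∀ i, ∑ x ∈ S, f i x = 1)
    (p : Fin n → ℝ → ℝ)
    (hp01 : ∀ i, ∀ x ∈ S, 0 ≤ p i x ∧ p i x ≤ 1) :
    (∀ i : Fin n, ∀ x ∈ S,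
        p i x + ∑ k ∈ Finset.univ.filter (fun k : Fin n => k ≠ i),
          ∑ y ∈ S, f k y * p k y ≤ 1)
      ↔
    (∀ π : Equiv.Perm (Fin n), ∀ t : Fin n, ∀ x ∈ S,
        p (π t) x ≤ 1 - ∑ k ∈ Finset.univ.filter (fun s : Fin n => s < t),
          ∑ y ∈ S, f (π k) y * p (π k) y) := by
  have hg0 : ∀ k : Fin n, 0 ≤ ∑ y ∈ S, f k y * p k y := by
    intro k
    exact Finset.sum_nonneg fun y hy =>
      mul_nonneg (hf01 k y hy).1 (hp01 k y hy).1
  constructor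
  · intro h π t x hx
    have key := h (π t) x hx
    have hsub : ∑ k ∈ Finset.univ.filter (fun s : Fin n => s < t),
          ∑ y ∈ S, f (π k) y * p (π k) y
        ≤ ∑ k ∈ Finset.univ.filter (fun k : Fin n => k ≠ π t),
          ∑ y ∈ S, f k y * p k y := by
      have himg : ∑ k ∈ Finset.univ.filter (fun s : Fin n => s < t),
            ∑ y ∈ S, f (π k) y * p (π k) y
          = ∑ j ∈ (Finset.univ.filter (fun s : Fin n => s < t)).image π,
            ∑ y ∈ S, f j y * p j y := by
        rw [Finset.sum_image (fun a _ b _ hab => π.injective hab)]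
      rw [himg]
      apply Finset.sum_le_sum_of_subset_of_nonneg
      · intro j hj
        simp only [Finset.mem_image, Finset.mem_filter, Finset.mem_univ,
          true_and] at hj ⊢
        obtain ⟨k, hk, rfl⟩ := hj
        exact fun hc => absurd (π.injective hc) (ne_of_lt hk)
      · intro j _ _
        exact hg0 j
    linarith
  · intro h i x hx
    have hn : 0 < n := i.pos
    set t : Fin n := ⟨n - 1, Nat.sub_lt hn one_pos⟩ with ht
    set π : Equiv.Perm (Fin n) := Equiv.swap t i with hπ
    have hπt : π t = i := Equiv.swap_apply_left t i
    have key := h π t x hx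
    rw [hπt] at key
    have hlt : ∀ s : Fin n, s < t ↔ s ≠ t := by
      intro s
      rw [Fin.lt_def, Ne, Fin.ext_iff]
      have := s.isLt
      simp only [ht]
      omega
    have hset : Finset.univ.filter (fun s : Fin n => s < t)
        = Finset.univ.filter (fun s : Fin n => s ≠ t) := by
      ext s; simp [hlt s]
    have hsum : ∑ k ∈ Finset.univ.filter (fun s : Fin n => s < t),
          ∑ y ∈ S, f (π k) y * p (π k) y
        = ∑ k ∈ Finset.univ.filter (fun k : Fin n => k ≠ i),
          ∑ y ∈ S, f k y * p k y := by
      rw [hset, Finset.filter_ne' Finset.univ t, Finset.filter_ne' Finset.univ i,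
        Finset.sum_erase_eq_sub (Finset.mem_univ t),
        Finset.sum_erase_eq_sub (Finset.mem_univ i), hπt,
        Equiv.sum_comp π (fun k => ∑ y ∈ S, f k y * p k y)]
    rw [hsum] at key
    linarith
end

section
/- Let S be a finite set of nonnegative reals and f_i : S → [0,1] pmfs for i = 1,…,n. Consider the LP: maximize ∑_{i=1}^n ∑_{x∈S} x·f_i(x)·p_{ix} over p_{ix} ∈ [0,1] subject to ∑_{i=1}^n ∑_{x∈S} f_i(x)·p_{ix} ≤ 1. Then there exists an optimal solution p* with p*_{ix} = p*_{jx} for all i, j ∈ {1,…,n} and all x ∈ S. -/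
open Finset

/-- The offline relaxation LP has an optimal solution that is
symmetric across candidate identities (Lemma 7). -/
theorem stmt_3 (n : ℕ) (S : Finset ℝ) (hS : ∀ x ∈ S, 0 ≤ x)
    (f : Fin n → ℝ → ℝ)
    (hf01 : ∀ i, ∀ x ∈ S, 0 ≤ f i x ∧ f i x ≤ 1)
    (hfsum : ∀ i, ∑ x ∈ S, f i x = 1) :
    ∃ p : Fin n → ℝ → ℝ,
      (∀ i, ∀ x ∈ S, 0 ≤ p i x ∧ p i x ≤ 1) ∧
      (∑ i : Fin n, ∑ x ∈ S, f i x * p i x ≤ 1) ∧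
      (∀ i j : Fin n, ∀ x ∈ S, p i x = p j x) ∧
      (∀ q : Fin n → ℝ → ℝ,
        (∀ i, ∀ x ∈ S, 0 ≤ q i x ∧ q i x ≤ 1) →
        (∑ i : Fin n, ∑ x ∈ S, f i x * q i x ≤ 1) →
        ∑ i : Fin n, ∑ x ∈ S, x * f i x * q i x ≤
          ∑ i : Fin n, ∑ x ∈ S, x * f i x * p i x) := by
  classical
  set z : ℝ → ℝ := fun x => ∑ i : Fin n, f i x with hz
  have hz0 : ∀ x ∈ S, 0 ≤ z x := fun x hx => Finset.sum_nonneg fun i _ => (hf01 i x hx).1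
  have hzf : ∀ x ∈ S, ∀ i, f i x ≤ z x := fun x hx i =>
    Finset.single_le_sum (fun j _ => (hf01 j x hx).1) (mem_univ i)
  have hzzero : ∀ x ∈ S, z x = 0 → ∀ i, f i x = 0 := by
    intro x hx h0 i
    have h1 := hzf x hx i
    have h2 := (hf01 i x hx).1
    linarith
  let obj : ({x // x ∈ S} → ℝ) → ℝ := fun r => ∑ x ∈ S.attach, (x : ℝ) * z x * r x
  let con : ({x // x ∈ S} → ℝ) → ℝ := fun r => ∑ x ∈ S.attach, z x * r x
  have hobjc : Continuous obj :=
    continuous_finset_sum _ fun x _ => continuous_const.mul (continuous_apply x)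
  have hconc : Continuous con :=
    continuous_finset_sum _ fun x _ => continuous_const.mul (continuous_apply x)
  let A : Set ({x // x ∈ S} → ℝ) :=
    (Set.univ.pi fun _ => Set.Icc (0:ℝ) 1) ∩ {r | con r ≤ 1}
  have hAc : IsCompact A :=
    (isCompact_univ_pi fun _ => isCompact_Icc).inter_right
      (isClosed_le hconc continuous_const)
  have hA0 : (fun _ => (0:ℝ)) ∈ A := by
    constructor
    · intro x _; exact ⟨le_refl 0, zero_le_one⟩
    · simp [con]
  obtain ⟨r, hrA, hrmax⟩ := hAc.exists_isMaxOn ⟨_, hA0⟩ hobjc.continuousOn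
  have hr01 : ∀ x : {x // x ∈ S}, 0 ≤ r x ∧ r x ≤ 1 := fun x =>
    ⟨(hrA.1 x (Set.mem_univ x)).1, (hrA.1 x (Set.mem_univ x)).2⟩
  refine ⟨fun _ x => if hx : x ∈ S then r ⟨x, hx⟩ else 0, ?_, ?_, ?_, ?_⟩
  · intro i x hx
    simp only [dif_pos hx]
    exact hr01 ⟨x, hx⟩
  · calc ∑ i : Fin n, ∑ x ∈ S, f i x * (if hx : x ∈ S then r ⟨x, hx⟩ else 0)
        = ∑ x ∈ S, ∑ i : Fin n, f i x * (if hx : x ∈ S then r ⟨x, hx⟩ else 0) :=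
          Finset.sum_comm
      _ = ∑ x ∈ S.attach, ∑ i : Fin n, f i ↑x * r x := by
          rw [← Finset.sum_attach S
            (fun x => ∑ i : Fin n, f i x * (if hx : x ∈ S then r ⟨x, hx⟩ else 0))]
          exact Finset.sum_congr rfl fun x _ => Finset.sum_congr rfl fun i _ => by
            rw [dif_pos x.2]
      _ = con r := Finset.sum_congr rfl fun x _ => by
          rw [← Finset.sum_mul]
      _ ≤ 1 := hrA.2
  · intro i j x hx; rfl
  · intro q hq01 hqcon
    set rq : {x // x ∈ S} → ℝ := fun x =>
      if z ↑x = 0 then 0 else (∑ i : Fin n, f i ↑x * q i ↑x) / z ↑x with hrq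
    have hnum0 : ∀ x : {x // x ∈ S}, 0 ≤ ∑ i : Fin n, f i ↑x * q i ↑x := fun x =>
      Finset.sum_nonneg fun i _ =>
        mul_nonneg (hf01 i ↑x x.2).1 (hq01 i ↑x x.2).1
    have hnumz : ∀ x : {x // x ∈ S}, (∑ i : Fin n, f i ↑x * q i ↑x) ≤ z ↑x := fun x =>
      Finset.sum_le_sum fun i _ =>
        mul_le_of_le_one_right (hf01 i ↑x x.2).1 (hq01 i ↑x x.2).2
    have hkey : ∀ x : {x // x ∈ S}, z ↑x * rq x = ∑ i : Fin n, f i ↑x * q i ↑x := by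
      intro x
      by_cases h : z ↑x = 0
      · simp only [hrq, if_pos h, mul_zero]
        exact (Finset.sum_eq_zero fun i _ => by
          rw [hzzero ↑x x.2 h i, zero_mul]).symm
      · simp only [hrq, if_neg h]
        field_simp
    have hrqA : rq ∈ A := by
      constructor
      · intro x _
        by_cases h : z ↑x = 0
        · simp [hrq, h]
        · have hzpos : 0 < z ↑x := lt_of_le_of_ne (hz0 ↑x x.2) (Ne.symm h)
          simp only [hrq, if_neg h]
          exact Set.mem_Icc.mpr ⟨div_nonneg (hnum0 x) hzpos.le,
            div_le_one_of_le₀ (hnumz x) hzpos.le⟩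
      · show con rq ≤ 1
        calc con rq = ∑ x ∈ S.attach, ∑ i : Fin n, f i ↑x * q i ↑x :=
              Finset.sum_congr rfl fun x _ => hkey x
          _ = ∑ x ∈ S, ∑ i : Fin n, f i x * q i x :=
              Finset.sum_attach S (fun x => ∑ i : Fin n, f i x * q i x)
          _ = ∑ i : Fin n, ∑ x ∈ S, f i x * q i x := Finset.sum_comm
          _ ≤ 1 := hqcon
    have hkey2 : ∀ x : {x // x ∈ S},
        (↑x : ℝ) * z ↑x * rq x = ∑ i : Fin n, (↑x : ℝ) * f i ↑x * q i ↑x := by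
      intro x
      calc (↑x : ℝ) * z ↑x * rq x = (↑x : ℝ) * (z ↑x * rq x) := by ring
        _ = (↑x : ℝ) * ∑ i : Fin n, f i ↑x * q i ↑x := by rw [hkey x]
        _ = ∑ i : Fin n, (↑x : ℝ) * f i ↑x * q i ↑x := by
            rw [Finset.mul_sum]
            exact Finset.sum_congr rfl fun i _ => by ring
    calc ∑ i : Fin n, ∑ x ∈ S, x * f i x * q i x
        = ∑ x ∈ S, ∑ i : Fin n, x * f i x * q i x := Finset.sum_comm
      _ = ∑ x ∈ S.attach, ∑ i : Fin n, (↑x : ℝ) * f i ↑x * q i ↑x :=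
          (Finset.sum_attach S (fun x => ∑ i : Fin n, x * f i x * q i x)).symm
      _ = obj rq := (Finset.sum_congr rfl fun x _ => (hkey2 x).symm)
      _ ≤ obj r := hrmax hrqA
      _ = ∑ x ∈ S.attach, ∑ i : Fin n,
            (↑x : ℝ) * f i ↑x * (if hx : ↑x ∈ S then r ⟨↑x, hx⟩ else 0) := by
          refine Finset.sum_congr rfl fun x _ => ?_
          rw [show (x : ℝ) * z ↑x * r x
              = (↑x : ℝ) * (z ↑x) * r x from rfl]
          rw [Finset.sum_congr rfl (fun i (_ : i ∈ univ) => by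
            rw [dif_pos x.2] : ∀ i ∈ univ,
              (↑x : ℝ) * f i ↑x * (if hx : ↑x ∈ S then r ⟨↑x, hx⟩ else 0)
              = (↑x : ℝ) * f i ↑x * r x)]
          rw [← Finset.sum_mul, ← Finset.mul_sum]
      _ = ∑ x ∈ S, ∑ i : Fin n, x * f i x * (if hx : x ∈ S then r ⟨x, hx⟩ else 0) :=
          Finset.sum_attach S (fun x => ∑ i : Fin n, x * f i x * if hx : x ∈ S then r ⟨x, hx⟩ else 0)
      _ = ∑ i : Fin n, ∑ x ∈ S, x * f i x * (if hx : x ∈ S then r ⟨x, hx⟩ else 0) :=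
          Finset.sum_comm
end

section
/- Let X_1, …, X_n be independent nonnegative discrete random variables, where X_i has pmf f_i on a finite set S. Let A be any random selection procedure that selects at most one index from {1,…,n} (possibly none), and set p_{ix} = Pr[A selects i | X_i = x]. Then ∑_{i=1}^n ∑_{x∈S} f_i(x)·p_{ix} ≤ 1, and consequently E[value of selected candidate] = ∑_{i=1}^n ∑_{x∈S} x·f_i(x)·p_{ix} is at most the optimum of the LP: max ∑_{i,x} x·f_i(x)·p_{ix} subject to ∑_{i,x} f_i(x)·p_{ix} ≤ 1, p_{ix} ∈ [0,1]. In particular E[max_i X_i] is at most this LP optimum. -/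
open Finset MeasureTheory ProbabilityTheory Function

/-!
An event `H i` selecting candidate `i` splits along the values of `X i`, so
`f i x * p i x = P[X i = x, H i]`. Summing over `x ∈ S` gives at most `P[H i]`, and the events
`H i` are disjoint, so the total is at most `1`; the same decomposition evaluates the expected
selected value as `∑ x * f i x * p i x`. The prophet is the selection rule that picks the first
index attaining `max_i X_i`, which is again a rule selecting at most one index.
-/

section Selection

variable {Ω ι : Type*}

lemma indicator_eq_sum_indicator_level {Y : Ω → ℝ} {S : Finset ℝ} {ω : Ω} (hω : Y ω ∈ S)
    (A : Set Ω) : A.indicator Y ω = ∑ x ∈ S, ({ω | Y ω = x} ∩ A).indicator (fun _ => x) ω := by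
  rw [Finset.sum_eq_single_of_mem (Y ω) hω]
  · by_cases h : ω ∈ A <;> simp [Set.indicator, h]
  · exact fun x _ hx => Set.indicator_of_notMem (fun h => hx h.1.symm) _

variable [MeasurableSpace Ω] {μ : Measure Ω}

lemma measureReal_mul_cond_eq_inter [IsFiniteMeasure μ] {s : Set Ω} (hs : MeasurableSet s)
    (t : Set Ω) : (μ s).toReal * (μ[t | s]).toReal = μ.real (s ∩ t) := by
  rw [← ENNReal.toReal_mul, mul_comm, cond_mul_eq_inter hs, measureReal_def]

lemma sum_measureReal_level_inter_le [IsFiniteMeasure μ] {Y : Ω → ℝ} (hY : Measurable Y)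
    {A : Set Ω} (hA : MeasurableSet A) (S : Finset ℝ) :
    ∑ x ∈ S, μ.real ({ω | Y ω = x} ∩ A) ≤ μ.real A := by
  rw [← measureReal_biUnion_finset (f := fun x => {ω | Y ω = x} ∩ A) _
    fun x _ => (hY (measurableSet_singleton x)).inter hA]
  · exact measureReal_mono (Set.iUnion₂_subset fun x _ => Set.inter_subset_right)
  · intro x _ y _ hxy
    exact Set.disjoint_left.2 fun ω hx hy => hxy (hx.1.symm.trans hy.1)

variable [Fintype ι] {X : ι → Ω → ℝ} {S : Finset ℝ} {H : ι → Set Ω}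

lemma sum_sum_measureReal_level_inter_le_one [IsProbabilityMeasure μ]
    (hX : ∀ i, Measurable (X i)) (hH : ∀ i, MeasurableSet (H i))
    (hdisj : Pairwise (Disjoint on H)) :
    ∑ i, ∑ x ∈ S, μ.real ({ω | X i ω = x} ∩ H i) ≤ 1 :=
  calc ∑ i, ∑ x ∈ S, μ.real ({ω | X i ω = x} ∩ H i)
      ≤ ∑ i, μ.real (H i) := sum_le_sum fun i _ => sum_measureReal_level_inter_le (hX i) (hH i) S
    _ = μ.real (⋃ i, H i) := (measureReal_iUnion_fintype hdisj hH).symm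
    _ ≤ 1 := measureReal_le_one

lemma integral_sum_indicator_eq_sum_level [IsFiniteMeasure μ] (hX : ∀ i, Measurable (X i))
    (hS : ∀ᵐ ω ∂μ, ∀ i, X i ω ∈ S) (hH : ∀ i, MeasurableSet (H i)) :
    ∫ ω, ∑ i, (H i).indicator (X i) ω ∂μ =
      ∑ i, ∑ x ∈ S, x * μ.real ({ω | X i ω = x} ∩ H i) := by
  have hlevel : ∀ i x, MeasurableSet ({ω | X i ω = x} ∩ H i) :=
    fun i x => (hX i (measurableSet_singleton x)).inter (hH i)
  have hint : ∀ i x, Integrable (({ω | X i ω = x} ∩ H i).indicator fun _ => x) μ :=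
    fun i x => (integrable_const x).indicator (hlevel i x)
  rw [integral_congr_ae (hS.mono fun ω hω => sum_congr rfl fun i _ =>
      indicator_eq_sum_indicator_level (hω i) (H i)),
    integral_finsetSum _ fun i _ => integrable_finsetSum _ fun x _ => hint i x]
  refine sum_congr rfl fun i _ => ?_
  rw [integral_finsetSum _ fun x _ => hint i x]
  simp_rw [integral_indicator_const _ (hlevel i _), smul_eq_mul, mul_comm]

variable [IsProbabilityMeasure μ] (hX : ∀ i, Measurable (X i)) (hS : ∀ᵐ ω ∂μ, ∀ i, X i ω ∈ S)
  (hH : ∀ i, MeasurableSet (H i)) (hdisj : Pairwise (Disjoint on H))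
  {f q : ι → ℝ → ℝ} (hf : ∀ i x, f i x = (μ {ω | X i ω = x}).toReal)
  (hq : ∀ i x, q i x = (μ[H i | {ω | X i ω = x}]).toReal)
include hX hf hq

omit [Fintype ι] in
lemma mul_condSelection_eq (i : ι) (x : ℝ) : f i x * q i x = μ.real ({ω | X i ω = x} ∩ H i) := by
  rw [hf, hq]
  exact measureReal_mul_cond_eq_inter (s := {ω | X i ω = x}) (hX i (measurableSet_singleton x)) _

include hH hdisj in
lemma sum_sum_mul_condSelection_le_one : ∑ i, ∑ x ∈ S, f i x * q i x ≤ 1 := by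
  simp_rw [mul_condSelection_eq hX hf hq]
  exact sum_sum_measureReal_level_inter_le_one hX hH hdisj

include hS hH in
lemma integral_selected_eq_sum_condSelection :
    ∫ ω, ∑ i, (H i).indicator (X i) ω ∂μ = ∑ i, ∑ x ∈ S, x * f i x * q i x := by
  simp_rw [mul_assoc, mul_condSelection_eq hX hf hq]
  exact integral_sum_indicator_eq_sum_level hX hS hH

include hS hH hdisj in
lemma integral_selected_le_of_lp_bound {C : ℝ}
    (hC : ∀ q : ι → ℝ → ℝ, (∀ i, ∀ x ∈ S, 0 ≤ q i x ∧ q i x ≤ 1) →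
      ∑ i, ∑ x ∈ S, f i x * q i x ≤ 1 → ∑ i, ∑ x ∈ S, x * f i x * q i x ≤ C) :
    ∫ ω, ∑ i, (H i).indicator (X i) ω ∂μ ≤ C := by
  rw [integral_selected_eq_sum_condSelection hX hS hH hf hq]
  refine hC q (fun i x _ => ?_) (sum_sum_mul_condSelection_le_one hX hH hdisj hf hq)
  rw [hq]
  exact ⟨ENNReal.toReal_nonneg, measureReal_le_one (μ := μ[|{ω | X i ω = x}])⟩

end Selection

section FirstArgmax

variable {ι Ω : Type*} [LinearOrder ι] (X : ι → Ω → ℝ)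

def firstArgmax (i : ι) : Set Ω := {ω | (∀ j, X j ω ≤ X i ω) ∧ ∀ j < i, X j ω < X i ω}

lemma measurableSet_firstArgmax [MeasurableSpace Ω] [Countable ι] (hX : ∀ i, Measurable (X i))
    (i : ι) : MeasurableSet (firstArgmax X i) := by
  unfold firstArgmax
  measurability

lemma pairwise_disjoint_firstArgmax : Pairwise (Disjoint on firstArgmax X) := by
  intro i j hij
  refine Set.disjoint_left.2 fun ω hi hj => ?_
  rcases hij.lt_or_gt with h | h
  · exact (hj.2 i h).not_ge (hi.1 j)
  · exact (hi.2 j h).not_ge (hj.1 i)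

lemma exists_mem_firstArgmax [Fintype ι] [Nonempty ι] (ω : Ω) : ∃ i, ω ∈ firstArgmax X i := by
  classical
  set T := univ.filter fun i => ∀ j, X j ω ≤ X i ω
  obtain ⟨i, hi⟩ := Finite.exists_max (X · ω)
  have hT : T.Nonempty := ⟨i, mem_filter.2 ⟨mem_univ i, hi⟩⟩
  have hmax := (mem_filter.1 (T.min'_mem hT)).2
  refine ⟨T.min' hT, hmax, fun j hj => ?_⟩
  have hjT : j ∉ T := fun hjT => (T.min'_le j hjT).not_gt hj
  obtain ⟨k, hk⟩ : ∃ k, X j ω < X k ω := by simpa [T] using hjT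
  exact hk.trans_le (hmax k)

lemma iSup_eq_sum_indicator_firstArgmax [Fintype ι] (ω : Ω) :
    ⨆ i, X i ω = ∑ i, (firstArgmax X i).indicator (X i) ω := by
  cases isEmpty_or_nonempty ι
  · simp [Real.iSup_of_isEmpty]
  obtain ⟨i, hi⟩ := exists_mem_firstArgmax X ω
  rw [sum_eq_single i (fun j _ hji => Set.indicator_of_notMem
      (Set.disjoint_left.1 (pairwise_disjoint_firstArgmax X hji.symm) hi) _) (by simp),
    Set.indicator_of_mem hi]
  exact le_antisymm (ciSup_le hi.1) (le_ciSup (f := (X · ω)) (Finite.bddAbove_range _) i)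

end FirstArgmax

theorem stmt_4_general {Ω : Type*} [MeasurableSpace Ω] (μ : Measure Ω)
    [IsProbabilityMeasure μ]
    (n : ℕ) (S : Finset ℝ)
    (X : Fin n → Ω → ℝ) (hmX : ∀ i, Measurable (X i))
    (hsupp : ∀ᵐ ω ∂μ, ∀ i, X i ω ∈ S)
    (H : Fin n → Set Ω) (hmH : ∀ i, MeasurableSet (H i))
    (hdisj : ∀ i j, i ≠ j → Disjoint (H i) (H j))
    (f p : Fin n → ℝ → ℝ)
    (hf : ∀ i x, f i x = (μ {ω | X i ω = x}).toReal)
    (hp : ∀ i x, p i x = (ProbabilityTheory.cond μ {ω | X i ω = x} (H i)).toReal) :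
    (∑ i : Fin n, ∑ x ∈ S, f i x * p i x ≤ 1) ∧
    (∫ ω, ∑ i : Fin n, Set.indicator (H i) (X i) ω ∂μ =
      ∑ i : Fin n, ∑ x ∈ S, x * f i x * p i x) ∧
    (∀ C : ℝ,
      (∀ q : Fin n → ℝ → ℝ,
        (∀ i, ∀ x ∈ S, 0 ≤ q i x ∧ q i x ≤ 1) →
        (∑ i : Fin n, ∑ x ∈ S, f i x * q i x ≤ 1) →
        ∑ i : Fin n, ∑ x ∈ S, x * f i x * q i x ≤ C) →
      (∫ ω, ∑ i : Fin n, Set.indicator (H i) (X i) ω ∂μ ≤ C) ∧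
      (∫ ω, (⨆ i, X i ω) ∂μ ≤ C)) := by
  refine ⟨sum_sum_mul_condSelection_le_one hmX hmH hdisj hf hp,
    integral_selected_eq_sum_condSelection hmX hsupp hmH hf hp,
    fun C hC => ⟨integral_selected_le_of_lp_bound hmX hsupp hmH hdisj hf hp hC, ?_⟩⟩
  simp_rw [iSup_eq_sum_indicator_firstArgmax X]
  exact integral_selected_le_of_lp_bound hmX hsupp (measurableSet_firstArgmax X hmX)
    (pairwise_disjoint_firstArgmax X) hf (fun _ _ => rfl) hC

/-- Offline Relaxation Lemma: the conditional selection probabilities of any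
procedure selecting at most one candidate are feasible for the offline
relaxation LP, the expected selected value equals the LP objective at those
probabilities, and both it and `E[max_i X_i]` are bounded by the LP optimum. -/
theorem stmt_4 {Ω : Type*} [MeasurableSpace Ω] (μ : Measure Ω)
    [IsProbabilityMeasure μ]
    (n : ℕ) (hn : 0 < n) (S : Finset ℝ) (hS : ∀ x ∈ S, 0 ≤ x)
    (X : Fin n → Ω → ℝ) (hmX : ∀ i, Measurable (X i))
    (hsupp : ∀ᵐ ω ∂μ, ∀ i, X i ω ∈ S)
    (hindep : iIndepFun X μ)
    (H : Fin n → Set Ω) (hmH : ∀ i, MeasurableSet (H i))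
    (hdisj : ∀ i j, i ≠ j → Disjoint (H i) (H j))
    (f p : Fin n → ℝ → ℝ)
    (hf : ∀ i x, f i x = (μ {ω | X i ω = x}).toReal)
    (hp : ∀ i x, p i x = (ProbabilityTheory.cond μ {ω | X i ω = x} (H i)).toReal) :
    (∑ i : Fin n, ∑ x ∈ S, f i x * p i x ≤ 1) ∧
    (∫ ω, ∑ i : Fin n, Set.indicator (H i) (X i) ω ∂μ =
      ∑ i : Fin n, ∑ x ∈ S, x * f i x * p i x) ∧
    (∀ C : ℝ,
      (∀ q : Fin n → ℝ → ℝ,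
        (∀ i, ∀ x ∈ S, 0 ≤ q i x ∧ q i x ≤ 1) →
        (∑ i : Fin n, ∑ x ∈ S, f i x * q i x ≤ 1) →
        ∑ i : Fin n, ∑ x ∈ S, x * f i x * q i x ≤ C) →
      (∫ ω, ∑ i : Fin n, Set.indicator (H i) (X i) ω ∂μ ≤ C) ∧
      (∫ ω, (⨆ i, X i ω) ∂μ ≤ C)) :=
  stmt_4_general μ n S X hmX hsupp H hmH hdisj f p hf hp
end

section
/- Let S be a finite set of nonnegative reals, f_i : S → [0,1] pmfs for i = 1,…,n, and π a permutation of {1,…,n}. Let C* be the optimum of the offline relaxation LP (maximize ∑_{i,x} x·f_i(x)·p_{ix} subject to ∑_{i,x} f_i(x)·p_{ix} ≤ 1, p_{ix} ∈ [0,1]). Then the optimum of the online IIF LP (maximize ∑_{i,x} x·f_i(x)·p(x) over p : S → [0,1] subject to p(x) + ∑_{k=1}^{n-1} ∑_{y∈S} f_{π(k)}(y)·p(y) ≤ 1 for all x ∈ S) is at least C*/2. -/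
/-!
Average the offline solution over the items: at the value `x` use the probability
`∑ᵢ fᵢ(x) p*ᵢ(x) / ∑ᵢ fᵢ(x)`, which no longer depends on the item. Summed against the
`fᵢ(x)`, this symmetric policy has the same consumption (at most `1`) and the same
objective `C*` as `p*`. Halving it caps every probability and the total consumption
at `1/2`, so every IIF constraint holds, and the objective becomes `C*/2`.
-/

open Finset

section Symmetrize

variable {ι α : Type*} [Fintype ι]

/-- The item-independent policy obtained by averaging `q i x` with weights `f i x`;
it is `0` where all weights vanish. -/
noncomputable def symmetrize (f q : ι → α → ℝ) (x : α) : ℝ :=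
  (∑ i, f i x * q i x) / ∑ i, f i x

variable {f q : ι → α → ℝ} {x : α}

lemma symmetrize_nonneg (hf : ∀ i, 0 ≤ f i x) (hq : ∀ i, 0 ≤ q i x) :
    0 ≤ symmetrize f q x :=
  div_nonneg (sum_nonneg fun i _ => mul_nonneg (hf i) (hq i)) (sum_nonneg fun i _ => hf i)

lemma symmetrize_le_one (hf : ∀ i, 0 ≤ f i x) (hq : ∀ i, q i x ≤ 1) :
    symmetrize f q x ≤ 1 :=
  div_le_one_of_le₀ (sum_le_sum fun i _ => mul_le_of_le_one_right (hf i) (hq i))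
    (sum_nonneg fun i _ => hf i)

lemma sum_mul_symmetrize (hf : ∀ i, 0 ≤ f i x) :
    (∑ i, f i x) * symmetrize f q x = ∑ i, f i x * q i x := by
  by_cases hF : ∑ i, f i x = 0
  · have hzero : ∀ i, f i x = 0 := fun i =>
      (sum_eq_zero_iff_of_nonneg fun j _ => hf j).1 hF i (mem_univ i)
    simp [hzero]
  · exact mul_div_cancel₀ _ hF

lemma sum_sum_mul_symmetrize {S : Finset α} (hf : ∀ i, ∀ x ∈ S, 0 ≤ f i x) (w : α → ℝ) :
    ∑ i, ∑ x ∈ S, w x * f i x * symmetrize f q x = ∑ i, ∑ x ∈ S, w x * f i x * q i x := by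
  rw [sum_comm, sum_comm (s := univ)]
  refine sum_congr rfl fun x hx => ?_
  simp only [mul_assoc, ← mul_sum, ← sum_mul, sum_mul_symmetrize (hf · x hx)]

end Symmetrize

lemma Equiv.Perm.sum_comp_le_sum {ι : Type*} [Fintype ι] (π : Equiv.Perm ι) (T : Finset ι)
    {g : ι → ℝ} (hg : ∀ i, 0 ≤ g i) : ∑ k ∈ T, g (π k) ≤ ∑ i, g i :=
  (sum_le_sum_of_subset_of_nonneg (subset_univ T) fun k _ _ => hg (π k)).trans_eq
    (Equiv.sum_comp π g)

theorem stmt_5_general (n : ℕ) (S : Finset ℝ)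
    (f : Fin n → ℝ → ℝ)
    (hf01 : ∀ i, ∀ x ∈ S, 0 ≤ f i x ∧ f i x ≤ 1)
    (π : Equiv.Perm (Fin n))
    (pstar : Fin n → ℝ → ℝ)
    (hstar01 : ∀ i, ∀ x ∈ S, 0 ≤ pstar i x ∧ pstar i x ≤ 1)
    (hstarfeas : ∑ i : Fin n, ∑ x ∈ S, f i x * pstar i x ≤ 1)
    (Cstar : ℝ)
    (hC : Cstar = ∑ i : Fin n, ∑ x ∈ S, x * f i x * pstar i x) :
    ∃ p : ℝ → ℝ,
      (∀ x ∈ S, 0 ≤ p x ∧ p x ≤ 1) ∧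
      (∀ x ∈ S,
        p x + ∑ k ∈ Finset.univ.filter (fun k : Fin n => (k : ℕ) < n - 1),
          ∑ y ∈ S, f (π k) y * p y ≤ 1) ∧
      Cstar / 2 ≤ ∑ i : Fin n, ∑ x ∈ S, x * f i x * p x := by
  have hf : ∀ i, ∀ x ∈ S, 0 ≤ f i x := fun i x hx => (hf01 i x hx).1
  set s := symmetrize f pstar
  have hs0 : ∀ x ∈ S, 0 ≤ s x := fun x hx =>
    symmetrize_nonneg (hf · x hx) fun i => (hstar01 i x hx).1
  have hs1 : ∀ x ∈ S, s x ≤ 1 := fun x hx =>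
    symmetrize_le_one (hf · x hx) fun i => (hstar01 i x hx).2
  have hsum : ∀ w : ℝ → ℝ, ∑ i, ∑ x ∈ S, w x * f i x * (s x / 2) =
      (∑ i, ∑ x ∈ S, w x * f i x * pstar i x) / 2 := fun w => by
    simp only [mul_div_assoc', ← sum_div, sum_sum_mul_symmetrize hf w, s]
  have hcons : ∑ i, ∑ y ∈ S, f i y * (s y / 2) ≤ 1 / 2 := by
    have h := hsum fun _ => 1
    simp only [one_mul] at h
    linarith
  refine ⟨fun x => s x / 2, fun x hx => ⟨by linarith [hs0 x hx], by linarith [hs1 x hx]⟩,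
    fun x hx => ?_, by rw [hC, hsum fun x => x]⟩
  have hprefix := π.sum_comp_le_sum (univ.filter fun k : Fin n => (k : ℕ) < n - 1)
    (g := fun i => ∑ y ∈ S, f i y * (s y / 2))
    fun i => sum_nonneg fun y hy => mul_nonneg (hf i y hy) (by linarith [hs0 y hy])
  linarith [hs1 x hx]

/-- The optimum of the online IIF LP is at least half the optimum `C*`
of the offline relaxation LP (LP formulation of the IIF Diagonal Arc). -/
theorem stmt_5 (n : ℕ) (S : Finset ℝ) (hS : ∀ x ∈ S, 0 ≤ x)
    (f : Fin n → ℝ → ℝ)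
    (hf01 : ∀ i, ∀ x ∈ S, 0 ≤ f i x ∧ f i x ≤ 1)
    (hfsum : ∀ i, ∑ x ∈ S, f i x = 1)
    (π : Equiv.Perm (Fin n))
    (pstar : Fin n → ℝ → ℝ)
    (hstar01 : ∀ i, ∀ x ∈ S, 0 ≤ pstar i x ∧ pstar i x ≤ 1)
    (hstarfeas : ∑ i : Fin n, ∑ x ∈ S, f i x * pstar i x ≤ 1)
    (hstaropt : ∀ q : Fin n → ℝ → ℝ,
      (∀ i, ∀ x ∈ S, 0 ≤ q i x ∧ q i x ≤ 1) →
      (∑ i : Fin n, ∑ x ∈ S, f i x * q i x ≤ 1) →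
      ∑ i : Fin n, ∑ x ∈ S, x * f i x * q i x ≤
        ∑ i : Fin n, ∑ x ∈ S, x * f i x * pstar i x)
    (Cstar : ℝ)
    (hC : Cstar = ∑ i : Fin n, ∑ x ∈ S, x * f i x * pstar i x) :
    ∃ p : ℝ → ℝ,
      (∀ x ∈ S, 0 ≤ p x ∧ p x ≤ 1) ∧
      (∀ x ∈ S,
        p x + ∑ k ∈ Finset.univ.filter (fun k : Fin n => (k : ℕ) < n - 1),
          ∑ y ∈ S, f (π k) y * p y ≤ 1) ∧
      Cstar / 2 ≤ ∑ i : Fin n, ∑ x ∈ S, x * f i x * p x :=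
  stmt_5_general n S f hf01 π pstar hstar01 hstarfeas Cstar hC
end

section
/- Let S be a finite set of nonnegative reals and f_i : S → [0,1] pmfs for i = 1,…,n. Let C* be the optimum of the offline relaxation LP. Then the optimum of the online TIF LP (maximize ∑_{i,x} x·f_i(x)·p(i,x) over p : {1,…,n}×S → [0,1] subject to p(i,x) + ∑_{k≠i} ∑_{y∈S} f_k(y)·p(k,y) ≤ 1 for all i and x) is at least C*/2. -/
open Finset

/-- The optimum of the online TIF LP is at least half the optimum `C*`
of the offline relaxation LP (LP formulation of the TIF Diagonal Arc). -/
theorem stmt_6 (n : ℕ) (S : Finset ℝ) (hS : ∀ x ∈ S, 0 ≤ x)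
    (f : Fin n → ℝ → ℝ)
    (hf01 : ∀ i, ∀ x ∈ S, 0 ≤ f i x ∧ f i x ≤ 1)
    (hfsum : ∀ i, ∑ x ∈ S, f i x = 1)
    (pstar : Fin n → ℝ → ℝ)
    (hstar01 : ∀ i, ∀ x ∈ S, 0 ≤ pstar i x ∧ pstar i x ≤ 1)
    (hstarfeas : ∑ i : Fin n, ∑ x ∈ S, f i x * pstar i x ≤ 1)
    (hstaropt : ∀ q : Fin n → ℝ → ℝ,
      (∀ i, ∀ x ∈ S, 0 ≤ q i x ∧ q i x ≤ 1) →
      (∑ i : Fin n, ∑ x ∈ S, f i x * q i x ≤ 1) →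
      ∑ i : Fin n, ∑ x ∈ S, x * f i x * q i x ≤
        ∑ i : Fin n, ∑ x ∈ S, x * f i x * pstar i x)
    (Cstar : ℝ)
    (hC : Cstar = ∑ i : Fin n, ∑ x ∈ S, x * f i x * pstar i x) :
    ∃ p : Fin n → ℝ → ℝ,
      (∀ i, ∀ x ∈ S, 0 ≤ p i x ∧ p i x ≤ 1) ∧
      (∀ i : Fin n, ∀ x ∈ S,
        p i x + ∑ k ∈ Finset.univ.filter (fun k : Fin n => k ≠ i),
          ∑ y ∈ S, f k y * p k y ≤ 1) ∧
      Cstar / 2 ≤ ∑ i : Fin n, ∑ x ∈ S, x * f i x * p i x := by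
  refine ⟨fun i x => pstar i x / 2, ?_, ?_, ?_⟩
  · intro i x hx
    obtain ⟨h0, h1⟩ := hstar01 i x hx
    constructor <;> linarith
  · intro i x hx
    have h1 : pstar i x / 2 ≤ 1 / 2 := by linarith [(hstar01 i x hx).2]
    have h2 : ∑ k ∈ Finset.univ.filter (fun k : Fin n => k ≠ i),
        ∑ y ∈ S, f k y * (pstar k y / 2) ≤ 1 / 2 := by
      have hsub : (Finset.univ.filter (fun k : Fin n => k ≠ i)) ⊆ Finset.univ :=
        Finset.filter_subset _ _
      have hle : ∑ k ∈ Finset.univ.filter (fun k : Fin n => k ≠ i),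
          ∑ y ∈ S, f k y * pstar k y ≤ ∑ k : Fin n, ∑ y ∈ S, f k y * pstar k y := by
        apply Finset.sum_le_sum_of_subset_of_nonneg hsub
        intro k _ _
        apply Finset.sum_nonneg
        intro y hy
        exact mul_nonneg (hf01 k y hy).1 (hstar01 k y hy).1
      have := hle.trans hstarfeas
      calc ∑ k ∈ Finset.univ.filter (fun k : Fin n => k ≠ i),
            ∑ y ∈ S, f k y * (pstar k y / 2)
          = (∑ k ∈ Finset.univ.filter (fun k : Fin n => k ≠ i),
            ∑ y ∈ S, f k y * pstar k y) / 2 := by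
            rw [Finset.sum_div]
            congr 1; ext k
            rw [Finset.sum_div]
            congr 1; ext y; ring
        _ ≤ 1 / 2 := by linarith
    linarith
  · have : ∑ i : Fin n, ∑ x ∈ S, x * f i x * (pstar i x / 2)
        = (∑ i : Fin n, ∑ x ∈ S, x * f i x * pstar i x) / 2 := by
      rw [Finset.sum_div]
      congr 1; ext i
      rw [Finset.sum_div]
      congr 1; ext x; ring
    rw [this, hC]
end

section
/- Let X_1,…,X_n, Y_1,…,Y_n be mutually independent nonnegative random variables with X_i and Y_i identically distributed (continuous, so all 2n values are almost surely distinct). The rule 'select index i such that X_i = max_j X_j, provided X_i > Y_i; otherwise select nothing' picks a value whose expectation is at least (1/2)·E[max_j X_j]. -/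
/-!
Let `Z` be the family of all `2n` values `X₁, …, Xₙ, Y₁, …, Yₙ`, and let `T_q = valueIfMax q Z`
be `Z_q` on the event that `Z_q` is the overall maximum and `0` otherwise. For nonnegative values,
`max_i X_i ≤ ∑_q T_q`. Swapping `X_i` with `Y_i` preserves the joint law of the independent
family, so `E[T_{X_i}] = E[T_{Y_i}]`, whence `∑_i E[T_{X_i}] ≥ E[max_i X_i] / 2`. Finally, when
the values are distinct, `∑_i T_{X_i}` is nonzero only if the overall maximum is some `X_i`; then
`X_i > Y_i` and the rule selects `X_i`.
-/

open Finset MeasureTheory ProbabilityTheory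

section ValueIfMax

variable {ι : Type*}

noncomputable def valueIfMax (q : ι) : (ι → ℝ) → ℝ :=
  {v | ∀ p, v p ≤ v q}.indicator fun v => v q

variable {q : ι} {v : ι → ℝ}

lemma valueIfMax_of_forall_le (h : ∀ p, v p ≤ v q) : valueIfMax q v = v q :=
  Set.indicator_of_mem (show v ∈ {v : ι → ℝ | ∀ p, v p ≤ v q} from h) _

lemma valueIfMax_of_not_forall_le (h : ¬∀ p, v p ≤ v q) : valueIfMax q v = 0 :=
  Set.indicator_of_notMem (show v ∉ {v : ι → ℝ | ∀ p, v p ≤ v q} from h) _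

lemma valueIfMax_nonneg (h : 0 ≤ v q) : 0 ≤ valueIfMax q v :=
  Set.indicator_apply_nonneg fun _ => h

lemma valueIfMax_comp_equiv (e : ι ≃ ι) (q : ι) (v : ι → ℝ) :
    valueIfMax q (v ∘ e) = valueIfMax (e q) v := by
  by_cases h : ∀ p, v p ≤ v (e q)
  · rw [valueIfMax_of_forall_le h, valueIfMax_of_forall_le (v := v ∘ e) fun p => h (e p),
      Function.comp_apply]
  · rw [valueIfMax_of_not_forall_le h, valueIfMax_of_not_forall_le]
    exact fun h' => h (e.surjective.forall.2 h')

lemma measurable_valueIfMax [Countable ι] (q : ι) : Measurable (valueIfMax q) := by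
  refine (measurable_pi_apply q).indicator ?_
  simp only [Set.ofPred_forall]
  exact .iInter fun p => measurableSet_le (measurable_pi_apply p) (measurable_pi_apply q)

lemma le_sum_valueIfMax [Fintype ι] (hv : ∀ q, 0 ≤ v q) (p : ι) :
    v p ≤ ∑ q, valueIfMax q v := by
  have : Nonempty ι := ⟨p⟩
  obtain ⟨q, hq⟩ := Finite.exists_max v
  calc v p ≤ valueIfMax q v := (valueIfMax_of_forall_le hq).symm ▸ hq p
    _ ≤ ∑ q, valueIfMax q v :=
      single_le_sum (fun q _ => valueIfMax_nonneg (hv q)) (mem_univ q)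

lemma valueIfMax_eq_zero_of_ne (hv : Function.Injective v) {r : ι}
    (hq : ∀ p, v p ≤ v q) (hr : r ≠ q) : valueIfMax r v = 0 :=
  valueIfMax_of_not_forall_le fun hmax => hr (hv (le_antisymm (hq r) (hmax q)))

lemma sum_valueIfMax_inl_le {κ : Type*} [Fintype κ] {v : κ ⊕ κ → ℝ}
    (hinj : Function.Injective v) (hv : ∀ q, 0 ≤ v q) :
    ∑ i, valueIfMax (.inl i) v ≤
      {v : κ ⊕ κ → ℝ | ∃ i, (∀ j, v (.inl j) ≤ v (.inl i)) ∧ v (.inr i) < v (.inl i)}.indicator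
        (fun v => ⨆ i, v (.inl i)) v := by
  by_cases hmax : ∃ i, ∀ q, v q ≤ v (.inl i)
  · obtain ⟨i, hi⟩ := hmax
    have hsel : v (.inr i) < v (.inl i) :=
      (hi _).lt_of_ne (hinj.ne Sum.inr_ne_inl)
    rw [sum_eq_single i (fun j _ hj => valueIfMax_eq_zero_of_ne hinj hi (by simpa using hj))
        (by simp), valueIfMax_of_forall_le hi, Set.indicator_of_mem]
    · exact le_ciSup (Set.finite_range fun i => v (.inl i)).bddAbove i
    · exact ⟨i, fun j => hi _, hsel⟩
  · rw [sum_eq_zero fun (i : κ) _ => valueIfMax_of_not_forall_le fun h => hmax ⟨i, h⟩]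
    exact Set.indicator_apply_nonneg fun _ => Real.iSup_nonneg fun i => hv _

end ValueIfMax

section Exchangeability

variable {Ω ι : Type*} [MeasurableSpace Ω] {μ : Measure Ω} [Fintype ι]

theorem ProbabilityTheory.iIndepFun.identDistrib_comp_equiv {β : Type*} [MeasurableSpace β]
    {Z : ι → Ω → β} (hindep : iIndepFun Z μ) (e : ι ≃ ι)
    (he : ∀ q, IdentDistrib (Z (e q)) (Z q) μ μ) :
    IdentDistrib (fun ω q => Z (e q) ω) (fun ω q => Z q ω) μ μ where
  aemeasurable_fst := aemeasurable_pi_lambda _ fun q => (he q).aemeasurable_fst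
  aemeasurable_snd := aemeasurable_pi_lambda _ fun q => (he q).aemeasurable_snd
  map_eq := by
    rw [(hindep.precomp e.injective).map_fun_eq_pi_map fun q => (he q).aemeasurable_fst,
      hindep.map_fun_eq_pi_map fun q => (he q).aemeasurable_snd]
    exact congrArg Measure.pi (funext fun q => (he q).map_eq)

theorem integral_valueIfMax_eq_of_iIndepFun [DecidableEq ι] {Z : ι → Ω → ℝ}
    (hindep : iIndepFun Z μ) (hZ : ∀ q, AEMeasurable (Z q) μ) {a b : ι}
    (hab : IdentDistrib (Z a) (Z b) μ μ) :
    ∫ ω, valueIfMax a (fun q => Z q ω) ∂μ = ∫ ω, valueIfMax b (fun q => Z q ω) ∂μ := by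
  set e := Equiv.swap b a
  have he : ∀ q, IdentDistrib (Z (e q)) (Z q) μ μ := by
    intro q
    rcases eq_or_ne q b with rfl | hb
    · simpa [e] using hab
    rcases eq_or_ne q a with rfl | ha
    · simpa [e] using hab.symm
    · simpa [e, Equiv.swap_apply_of_ne_of_ne hb ha] using IdentDistrib.refl (hZ q)
  calc ∫ ω, valueIfMax a (fun q => Z q ω) ∂μ = ∫ ω, valueIfMax a (fun q => Z (e q) ω) ∂μ :=
        ((hindep.identDistrib_comp_equiv e he).comp (measurable_valueIfMax a)).integral_eq.symm
    _ = ∫ ω, valueIfMax b (fun q => Z q ω) ∂μ := by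
        congr with ω
        rw [← Function.comp_def (fun q => Z q ω) e, valueIfMax_comp_equiv, Equiv.swap_apply_right]

end Exchangeability

theorem MeasureTheory.Integrable.valueIfMax {Ω ι : Type*} [MeasurableSpace Ω] {μ : Measure Ω}
    [Countable ι] {Z : ι → Ω → ℝ} (hZ : ∀ q, AEMeasurable (Z q) μ) {q : ι}
    (hq : Integrable (Z q) μ) :
    Integrable (fun ω => valueIfMax q (fun p => Z p ω)) μ :=
  hq.mono ((measurable_valueIfMax q).comp_aemeasurable
      (aemeasurable_pi_lambda _ hZ)).aestronglyMeasurable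
    (ae_of_all _ fun _ => norm_indicator_le_norm_self _ _)

theorem stmt_10_general {Ω : Type*} [MeasurableSpace Ω] (μ : Measure Ω)
    (n : ℕ) (X Y : Fin n → Ω → ℝ)
    (hmX : ∀ i, Measurable (X i)) (hmY : ∀ i, Measurable (Y i))
    (hnonneg : ∀ᵐ ω ∂μ, ∀ i, 0 ≤ X i ω ∧ 0 ≤ Y i ω)
    (hindep : iIndepFun (Sum.elim X Y) μ)
    (hid : ∀ i, IdentDistrib (X i) (Y i) μ μ)
    (hdistinct : ∀ᵐ ω ∂μ,
      Function.Injective (fun q : Fin n ⊕ Fin n => Sum.elim X Y q ω))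
    (hint : Integrable (fun ω => ⨆ i, X i ω) μ) :
    (1 / 2 : ℝ) * ∫ ω, (⨆ i, X i ω) ∂μ ≤
      ∫ ω, Set.indicator
        {ω | ∃ i, (∀ j, X j ω ≤ X i ω) ∧ Y i ω < X i ω}
        (fun ω => ⨆ i, X i ω) ω ∂μ := by
  set T : Fin n ⊕ Fin n → Ω → ℝ := fun q ω => valueIfMax q (fun p => Sum.elim X Y p ω)
  have hmZ : ∀ q, AEMeasurable (Sum.elim X Y q) μ :=
    Sum.forall.2 ⟨fun i => (hmX i).aemeasurable, fun i => (hmY i).aemeasurable⟩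
  have hnonnegZ : ∀ᵐ ω ∂μ, ∀ q, 0 ≤ Sum.elim X Y q ω := by
    filter_upwards [hnonneg] with ω hω
    exact Sum.forall.2 ⟨fun i => (hω i).1, fun i => (hω i).2⟩
  have hintX : ∀ i, Integrable (X i) μ := fun i =>
    hint.mono' (hmX i).aestronglyMeasurable <| by
      filter_upwards [hnonneg] with ω hω
      rw [Real.norm_of_nonneg (hω i).1]
      exact le_ciSup (Set.finite_range fun i => X i ω).bddAbove i
  have hintZ : ∀ q, Integrable (Sum.elim X Y q) μ :=
    Sum.forall.2 ⟨hintX, fun i => (hid i).integrable_iff.1 (hintX i)⟩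
  have hintT : ∀ q, Integrable (T q) μ := fun q => (hintZ q).valueIfMax hmZ
  have hswap : ∀ i, ∫ ω, T (.inl i) ω ∂μ = ∫ ω, T (.inr i) ω ∂μ := fun i =>
    integral_valueIfMax_eq_of_iIndepFun hindep hmZ (hid i)
  have hcover : ∀ᵐ ω ∂μ, ⨆ i, X i ω ≤ ∑ q, T q ω := by
    filter_upwards [hnonnegZ] with ω hω
    exact Real.iSup_le (fun i => le_sum_valueIfMax hω (.inl i))
      (sum_nonneg fun q _ => valueIfMax_nonneg (hω q))
  have hselect : ∀ᵐ ω ∂μ, ∑ i, T (.inl i) ω ≤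
      {ω | ∃ i, (∀ j, X j ω ≤ X i ω) ∧ Y i ω < X i ω}.indicator (fun ω => ⨆ i, X i ω) ω := by
    filter_upwards [hnonnegZ, hdistinct] with ω hω hinj
    exact sum_valueIfMax_inl_le hinj hω
  have hA : MeasurableSet {ω | ∃ i, (∀ j, X j ω ≤ X i ω) ∧ Y i ω < X i ω} := by
    measurability
  calc (1 / 2 : ℝ) * ∫ ω, (⨆ i, X i ω) ∂μ ≤ (1 / 2) * ∫ ω, ∑ q, T q ω ∂μ := by
        refine mul_le_mul_of_nonneg_left ?_ (by norm_num)
        exact integral_mono_ae hint (integrable_finsetSum _ fun q _ => hintT q) hcover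
    _ = ∫ ω, ∑ i, T (.inl i) ω ∂μ := by
        rw [integral_finsetSum _ fun q _ => hintT q, Fintype.sum_sum_type,
          integral_finsetSum _ fun i _ => hintT _]
        simp only [hswap]
        ring
    _ ≤ _ := integral_mono_ae (integrable_finsetSum _ fun i _ => hintT _)
        (hint.indicator hA) hselect

/-- The single-sample offline rule (select the maximizer `i` of the `X`'s
provided `X i > Y i`) is `1/2`-competitive against `E[max_j X_j]`. -/
theorem stmt_10 {Ω : Type*} [MeasurableSpace Ω] (μ : Measure Ω)
    [IsProbabilityMeasure μ]
    (n : ℕ) (hn : 0 < n) (X Y : Fin n → Ω → ℝ)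
    (hmX : ∀ i, Measurable (X i)) (hmY : ∀ i, Measurable (Y i))
    (hnonneg : ∀ᵐ ω ∂μ, ∀ i, 0 ≤ X i ω ∧ 0 ≤ Y i ω)
    (hindep : iIndepFun (Sum.elim X Y) μ)
    (hid : ∀ i, IdentDistrib (X i) (Y i) μ μ)
    (hdistinct : ∀ᵐ ω ∂μ,
      Function.Injective (fun q : Fin n ⊕ Fin n => Sum.elim X Y q ω))
    (hint : Integrable (fun ω => ⨆ i, X i ω) μ) :
    (1 / 2 : ℝ) * ∫ ω, (⨆ i, X i ω) ∂μ ≤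
      ∫ ω, Set.indicator
        {ω | ∃ i, (∀ j, X j ω ≤ X i ω) ∧ Y i ω < X i ω}
        (fun ω => ⨆ i, X i ω) ω ∂μ :=
  stmt_10_general μ n X Y hmX hmY hnonneg hindep hid hdistinct hint
end

section
/- Let X_i, Y_i, Z_i (1 ≤ i ≤ n) be 3n mutually independent random variables, where X_i, Y_i, Z_i are each distributed according to F_i, and all 3n values are almost surely distinct. Let W* > W** be the largest and second largest of all 3n values. Then Pr[W* ∈ {X_1,…,X_n} and W** ∈ {Y_1,…,Y_n}] ≥ 1/9. -/
/-!
Almost surely the `3n` values are distinct, so up to a null set the sample space is partitioned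
by the events "the maximum sits at `p₁` and the second maximum at `p₂`", for the ordered pairs
of distinct positions `p₁ ≠ p₂`. The joint law is a product whose factor at position `(a, i)`
depends only on `i`, so it is invariant under permuting the three copies `X i, Y i, Z i` of each
index separately; such a permutation moves any pair `((a, i), (b, j))` of distinct positions to
`((0, i), (1, j))`. Hence every event of the partition has the probability of one of the `n²`
target events, each of which is hit by at most `9` pairs, and `1 ≤ 9 · P(target)`.
-/

open Finset MeasureTheory ProbabilityTheory
open scoped ENNReal

section TopTwo

variable {ι κ α : Type*} [LinearOrder α]

def topTwo (p₁ p₂ : ι) : Set (ι → α) :=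
  {f | (∀ q ≠ p₁, f q < f p₁) ∧ ∀ q, q ≠ p₁ → q ≠ p₂ → f q < f p₂}

lemma preimage_comp_topTwo (e : ι ≃ κ) (p₁ p₂ : ι) :
    (fun f : κ → α => f ∘ e) ⁻¹' topTwo p₁ p₂ = topTwo (e p₁) (e p₂) := by
  ext f
  simp only [topTwo, Set.mem_preimage, Set.mem_ofPred_eq, Function.comp_apply,
    e.forall_congr_right.symm, ne_eq, e.apply_eq_iff_eq]

lemma disjoint_topTwo {p₁ p₂ p₁' p₂' : ι} (h : p₁ ≠ p₂) (h' : p₁' ≠ p₂')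
    (hne : (p₁, p₂) ≠ (p₁', p₂')) : Disjoint (topTwo p₁ p₂ : Set (ι → α)) (topTwo p₁' p₂') := by
  refine Set.disjoint_left.2 fun f ⟨h₁, h₂⟩ ⟨h₁', h₂'⟩ => hne ?_
  obtain rfl : p₁ = p₁' := by
    by_contra hne₁
    exact lt_asymm (h₁' p₁ hne₁) (h₁ p₁' (Ne.symm hne₁))
  by_contra hne₂
  have hne₂ : p₂ ≠ p₂' := fun h => hne₂ (by rw [h])
  exact lt_asymm (h₂' p₂ h.symm hne₂) (h₂ p₂' h'.symm hne₂.symm)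

lemma exists_mem_topTwo_of_injective [Finite ι] [Nontrivial ι] {f : ι → α}
    (hf : Function.Injective f) : ∃ p₁ p₂, p₁ ≠ p₂ ∧ f ∈ topTwo p₁ p₂ := by
  obtain ⟨p₁, h₁⟩ := Finite.exists_max f
  obtain ⟨q, hq⟩ := exists_ne p₁
  have : Nonempty {q // q ≠ p₁} := ⟨⟨q, hq⟩⟩
  obtain ⟨⟨p₂, hp₂⟩, h₂⟩ := Finite.exists_max fun q : {q // q ≠ p₁} => f q
  exact ⟨p₁, p₂, hp₂.symm, fun q hq => (h₁ q).lt_of_ne (hf.ne hq),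
    fun q hq₁ hq₂ => (h₂ ⟨q, hq₁⟩).lt_of_ne (hf.ne hq₂)⟩

end TopTwo

lemma map_comp_equiv_pi {ι α : Type*} [Fintype ι] [MeasurableSpace α] (m : ι → Measure α)
    [∀ i, SigmaFinite (m i)] (e : ι ≃ ι) (he : ∀ i, m (e i) = m i) :
    (Measure.pi m).map (fun f => f ∘ e) = Measure.pi m := by
  have h := (measurePreserving_piCongrLeft (α := fun _ => α) m e.symm).map_eq
  have hcoe : ⇑(MeasurableEquiv.piCongrLeft (fun _ => α) e.symm) = fun f => f ∘ e := by
    funext f i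
    simp [MeasurableEquiv.piCongrLeft, Equiv.piCongrLeft]
  have hm : (fun i => m (e.symm i)) = m :=
    funext fun i => (he _).symm.trans (congrArg m (e.apply_symm_apply i))
  rwa [hcoe, hm] at h

lemma exists_perm_apply_eq_of_ne {κ : Type*} [DecidableEq κ] {a₁ a₂ a b : κ} (h₁₂ : a₁ ≠ a₂)
    (hab : a ≠ b) : ∃ π : Equiv.Perm κ, π a₁ = a ∧ π a₂ = b := by
  set s := Equiv.swap a₁ a
  have hs : a ≠ s a₂ := by
    have := s.injective.ne h₁₂
    rwa [Equiv.swap_apply_left] at this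
  refine ⟨Equiv.swap (s a₂) b * s, ?_, by simp⟩
  simp [s, Equiv.swap_apply_of_ne_of_ne hs hab]

lemma exists_prodCongrLeft_eq {κ β : Type*} [DecidableEq κ] [DecidableEq β] {p₁ p₂ : κ × β}
    (h : p₁ ≠ p₂) {a b : κ} (hab : a ≠ b) :
    ∃ σ : β → Equiv.Perm κ,
      Equiv.prodCongrLeft σ p₁ = (a, p₁.2) ∧ Equiv.prodCongrLeft σ p₂ = (b, p₂.2) := by
  obtain ⟨a₁, i⟩ := p₁
  obtain ⟨a₂, j⟩ := p₂
  by_cases hij : i = j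
  · subst hij
    obtain ⟨π, h₁, h₂⟩ := exists_perm_apply_eq_of_ne (fun h' : a₁ = a₂ => h (h' ▸ rfl)) hab
    exact ⟨fun _ => π, by simp [h₁], by simp [h₂]⟩
  · refine ⟨fun k => if k = i then Equiv.swap a₁ a else Equiv.swap a₂ b, by simp, ?_⟩
    simp [Ne.symm hij]

lemma sum_offDiag_le_card_sq_smul {κ β M : Type*} [Fintype κ] [Fintype β] [DecidableEq κ]
    [DecidableEq β] [AddCommMonoid M] [PartialOrder M] [CanonicallyOrderedAdd M]
    (g : β → β → M) :
    ∑ p ∈ (univ : Finset (κ × β)).offDiag, g p.1.2 p.2.2 ≤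
      Fintype.card κ ^ 2 • ∑ i, ∑ j, g i j := by
  calc ∑ p ∈ (univ : Finset (κ × β)).offDiag, g p.1.2 p.2.2
      ≤ ∑ p : (κ × β) × (κ × β), g p.1.2 p.2.2 := sum_le_sum_of_subset (subset_univ _)
    _ = Fintype.card κ ^ 2 • ∑ i, ∑ j, g i j := by
      simp [Fintype.sum_prod_type, ← smul_sum, pow_two, mul_smul]

section Probability

variable {Ω ι κ β α : Type*} [MeasurableSpace Ω] {μ : Measure Ω}
  [LinearOrder α] [TopologicalSpace α] [OrderClosedTopology α]
  [SecondCountableTopology α] [MeasurableSpace α] [OpensMeasurableSpace α]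

lemma measurableSet_topTwo [Countable ι] (p₁ p₂ : ι) :
    MeasurableSet (topTwo p₁ p₂ : Set (ι → α)) := by
  have hlt : ∀ q p : ι, Measurable fun f : ι → α => f q < f p := fun q p =>
    measurableSet_setOfPred.1 (measurableSet_lt (measurable_pi_apply q) (measurable_pi_apply p))
  exact measurableSet_setOfPred.2 <|
    (Measurable.forall fun q => measurable_const.imp (hlt q p₁)).and
      (Measurable.forall fun q => measurable_const.imp (measurable_const.imp (hlt q p₂)))

lemma measure_topTwo_eq_of_map_comp [Countable ι] {ν : Measure (ι → α)} {e : ι ≃ ι}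
    (hν : ν.map (fun f => f ∘ e) = ν) (p₁ p₂ : ι) :
    ν (topTwo (e p₁) (e p₂)) = ν (topTwo p₁ p₂) := by
  rw [← preimage_comp_topTwo, ← Measure.map_apply (by fun_prop) (measurableSet_topTwo _ _), hν]

lemma one_le_sum_map_topTwo [Fintype ι] [DecidableEq ι] [Nontrivial ι] [IsProbabilityMeasure μ]
    {V : Ω → ι → α} (hV : Measurable V) (hinj : ∀ᵐ ω ∂μ, Function.Injective (V ω)) :
    1 ≤ ∑ p ∈ univ.offDiag, μ.map V (topTwo p.1 p.2) := by
  have hcover : ∀ᵐ ω ∂μ, ω ∈ ⋃ p ∈ univ.offDiag, V ⁻¹' topTwo p.1 p.2 := by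
    filter_upwards [hinj] with ω hω
    obtain ⟨p₁, p₂, hne, hmem⟩ := exists_mem_topTwo_of_injective hω
    exact Set.mem_biUnion (x := (p₁, p₂)) (by simpa using hne) hmem
  have hdisj : ((univ.offDiag : Finset (ι × ι)) : Set (ι × ι)).PairwiseDisjoint
      fun p => V ⁻¹' topTwo p.1 p.2 := fun p hp q hq hpq =>
    (disjoint_topTwo (by simpa using hp) (by simpa using hq) hpq).preimage V
  calc 1 = μ Set.univ := measure_univ.symm
    _ ≤ μ (⋃ p ∈ univ.offDiag, V ⁻¹' topTwo p.1 p.2) :=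
      measure_mono_ae (hcover.mono fun ω hω _ => hω)
    _ = ∑ p ∈ univ.offDiag, μ.map V (topTwo p.1 p.2) := by
      rw [measure_biUnion_finset hdisj fun p _ => hV (measurableSet_topTwo _ _)]
      exact sum_congr rfl fun p _ => (Measure.map_apply hV (measurableSet_topTwo _ _)).symm

lemma measure_exists_topTwo [Countable κ] [Fintype β] {V : Ω → κ × β → α} (hV : Measurable V)
    {a b : κ} (hab : a ≠ b) :
    μ {ω | ∃ i j, V ω ∈ topTwo (a, i) (b, j)} = ∑ i, ∑ j, μ.map V (topTwo (a, i) (b, j)) := by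
  have hdisj : Pairwise (Function.onFun Disjoint
      fun r : β × β => V ⁻¹' topTwo (a, r.1) (b, r.2)) := fun r s hrs =>
    (disjoint_topTwo (by simp [hab]) (by simp [hab])
      (by simpa [Prod.ext_iff] using hrs)).preimage V
  have hset : {ω | ∃ i j, V ω ∈ topTwo (a, i) (b, j)} =
      ⋃ r : β × β, V ⁻¹' topTwo (a, r.1) (b, r.2) := by
    ext ω; simp
  rw [hset, measure_iUnion hdisj fun r => hV (measurableSet_topTwo _ _), tsum_fintype,
    Fintype.sum_prod_type]
  exact sum_congr rfl fun i _ => sum_congr rfl fun j _ =>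
    (Measure.map_apply hV (measurableSet_topTwo _ _)).symm

theorem inv_card_sq_le_measure_exists_topTwo [Fintype κ] [Fintype β] [Nonempty β]
    [IsProbabilityMeasure μ] {V : Ω → κ × β → α} (hV : Measurable V)
    (hexch : ∀ σ : β → Equiv.Perm κ,
      (μ.map V).map (fun f => f ∘ Equiv.prodCongrLeft σ) = μ.map V)
    (hinj : ∀ᵐ ω ∂μ, Function.Injective (V ω)) {a b : κ} (hab : a ≠ b) :
    ((Fintype.card κ : ℝ≥0∞) ^ 2)⁻¹ ≤ μ {ω | ∃ i j, V ω ∈ topTwo (a, i) (b, j)} := by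
  classical
  have : Nontrivial κ := nontrivial_of_ne a b hab
  set g : β → β → ℝ≥0∞ := fun i j => μ.map V (topTwo (a, i) (b, j))
  have hsymm : ∀ p ∈ (univ : Finset (κ × β)).offDiag,
      μ.map V (topTwo p.1 p.2) = g p.1.2 p.2.2 := by
    intro p hp
    obtain ⟨σ, h₁, h₂⟩ := exists_prodCongrLeft_eq (mem_offDiag.1 hp).2.2 hab
    rw [← measure_topTwo_eq_of_map_comp (hexch σ), h₁, h₂]
  rw [measure_exists_topTwo hV hab, ENNReal.inv_le_iff_le_mul (by simp) (by simp)]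
  calc 1 ≤ ∑ p ∈ univ.offDiag, μ.map V (topTwo p.1 p.2) := one_le_sum_map_topTwo hV hinj
    _ = ∑ p ∈ univ.offDiag, g p.1.2 p.2.2 := sum_congr rfl hsymm
    _ ≤ Fintype.card κ ^ 2 • ∑ i, ∑ j, g i j := sum_offDiag_le_card_sq_smul g
    _ = _ := by rw [nsmul_eq_mul]; push_cast; rfl

end Probability

/-- The probability that the largest of the `3n` values lies among the `X`'s
and the second largest among the `Y`'s is at least `1/9`. -/
theorem stmt_12 {Ω : Type*} [MeasurableSpace Ω] (μ : Measure Ω)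
    [IsProbabilityMeasure μ]
    (n : ℕ) (hn : 0 < n) (X Y Z : Fin n → Ω → ℝ)
    (hmX : ∀ i, Measurable (X i)) (hmY : ∀ i, Measurable (Y i))
    (hmZ : ∀ i, Measurable (Z i))
    (hindep : iIndepFun
      (fun q : Fin 3 × Fin n => ![X, Y, Z] q.1 q.2) μ)
    (hidY : ∀ i, IdentDistrib (X i) (Y i) μ μ)
    (hidZ : ∀ i, IdentDistrib (X i) (Z i) μ μ)
    (hdistinct : ∀ᵐ ω ∂μ,
      Function.Injective (fun q : Fin 3 × Fin n => ![X, Y, Z] q.1 q.2 ω)) :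
    (1 / 9 : ENNReal) ≤
      μ {ω | ∃ i j : Fin n,
        (∀ q : Fin 3 × Fin n, q ≠ (0, i) → ![X, Y, Z] q.1 q.2 ω < X i ω) ∧
        (∀ q : Fin 3 × Fin n, q ≠ (0, i) → q ≠ (1, j) →
          ![X, Y, Z] q.1 q.2 ω < Y j ω)} := by
  have : Nonempty (Fin n) := Fin.pos_iff_nonempty.1 hn
  have hm : ∀ q : Fin 3 × Fin n, Measurable (![X, Y, Z] q.1 q.2) := by
    rintro ⟨a, i⟩
    fin_cases a
    exacts [hmX i, hmY i, hmZ i]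
  have hlaw : μ.map (fun ω (q : Fin 3 × Fin n) => ![X, Y, Z] q.1 q.2 ω) =
      Measure.pi fun q => μ.map (X q.2) := by
    rw [hindep.map_fun_eq_pi_map fun q => (hm q).aemeasurable]
    congr 1
    funext ⟨a, i⟩
    fin_cases a
    exacts [rfl, (hidY i).map_eq.symm, (hidZ i).map_eq.symm]
  have : ∀ i, IsProbabilityMeasure (μ.map (X i)) :=
    fun i => Measure.isProbabilityMeasure_map (hmX i).aemeasurable
  calc (1 / 9 : ℝ≥0∞) = ((Fintype.card (Fin 3) : ℝ≥0∞) ^ 2)⁻¹ := by norm_num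
    _ ≤ _ := inv_card_sq_le_measure_exists_topTwo (measurable_pi_lambda _ hm)
      (fun σ => by rw [hlaw]; exact map_comp_equiv_pi _ _ fun q => rfl) hdistinct
      (a := 0) (b := 1) (by decide)
end

section
/- In the setting of the double-sample algorithm (X_i, Y_i, Z_i ~ F_i mutually independent, Y* = max_i Y_i, distinct values a.s.), for any index i = π(t) and values x > y: Pr[hire i | X_i = x, Y* = y] = ∏_{j=1}^n F_j(y), which depends on neither i nor the permutation π. Consequently Pr[hire i | X_i = x] = ∑_y Pr[Y* = y]·∏_{j=1}^n F_j(y)·1[x > y] — the same for every i and every arrival ordering — so the algorithm satisfies both IIF and TIF. -/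
/-!
Given `X i = x` and `Y* = y < x`, candidate `i` is hired exactly when every sample the rule
inspects (the observed values `X` of the earlier arrivals, the fresh copies `Z` of `i` and of
the later arrivals) lies below `y`. These samples are coordinates of the independent family
disjoint from those determining `(X i, Y*)`, since `i`'s own `X` is never inspected; as
`Z j ∼ X j` and the arrival order is a bijection, they all lie below `y` with probability
`∏ j F_j(y)`. Summing over the finitely many values of `Y*`, which is independent of `X i`,
gives the unconditional formula.
-/

open Finset MeasureTheory ProbabilityTheory
open scoped Classical

theorem measurable_iSup_comap_of_mem {Ω ι β : Type*} [mβ : MeasurableSpace β]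
    {f : ι → Ω → β} {S : Set ι} {q : ι} (hq : q ∈ S) :
    Measurable[⨆ i ∈ S, mβ.comap (f i)] (f q) :=
  (comap_measurable (f q)).mono (le_iSup₂ (f := fun i (_ : i ∈ S) => mβ.comap (f i)) q hq)
    le_rfl

section IndependentFamily

variable {Ω ι β : Type*} [MeasurableSpace Ω] [mβ : MeasurableSpace β] {μ : Measure Ω}
  {f : ι → Ω → β}

theorem ProbabilityTheory.iIndepFun.measure_inter_eq_mul_of_disjoint (hf : iIndepFun f μ)
    (hmf : ∀ i, Measurable (f i)) {S T : Set ι} (hST : Disjoint S T) {A B : Set Ω}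
    (hA : MeasurableSet[⨆ i ∈ S, mβ.comap (f i)] A)
    (hB : MeasurableSet[⨆ i ∈ T, mβ.comap (f i)] B) :
    μ (A ∩ B) = μ A * μ B :=
  (Indep_iff _ _ _).1 (indep_iSup_of_disjoint (fun i => (hmf i).comap_le) hf.iIndep hST)
    A B hA hB

theorem ProbabilityTheory.iIndepFun.measure_forall_mem_eq_prod {κ : Type*} [Fintype κ]
    (hf : iIndepFun f μ) {u : κ → ι} (hu : u.Injective) {s : Set β} (hs : MeasurableSet s) :
    μ {ω | ∀ k, f (u k) ω ∈ s} = ∏ k, μ (f (u k) ⁻¹' s) := by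
  rw [Set.ofPred_forall]
  exact (hf.precomp hu).meas_iInter fun k => ⟨s, hs, rfl⟩

end IndependentFamily

theorem ae_iSup_mem_of_ae_forall_mem {Ω ι α : Type*} [MeasurableSpace Ω]
    [ConditionallyCompleteLinearOrder α] [Finite ι] [Nonempty ι] {μ : Measure Ω}
    {Y : ι → Ω → α} {S : Set α} (h : ∀ᵐ ω ∂μ, ∀ j, Y j ω ∈ S) :
    ∀ᵐ ω ∂μ, ⨆ j, Y j ω ∈ S := by
  filter_upwards [h] with ω hω
  obtain ⟨j, hj⟩ := exists_eq_ciSup_of_finite (f := fun j => Y j ω)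
  exact hj ▸ hω j

theorem measure_eq_sum_measure_inter_preimage_singleton {Ω β : Type*} [MeasurableSpace Ω]
    [MeasurableSpace β] [MeasurableSingletonClass β] {μ : Measure Ω} {W : Ω → β}
    (hW : Measurable W) {S : Finset β} (hS : ∀ᵐ ω ∂μ, W ω ∈ S) (E : Set Ω) :
    μ E = ∑ y ∈ S, μ (E ∩ W ⁻¹' {y}) := by
  have hfiber : ∀ y ∈ S, MeasurableSet (W ⁻¹' {y}) := fun y _ => hW (measurableSet_singleton y)
  have hS' : W ⁻¹' S =ᵐ[μ.restrict E] (Set.univ : Set Ω) :=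
    Filter.eventuallyEq_univ.2 (ae_restrict_of_ae hS)
  calc μ E = μ.restrict E (W ⁻¹' S) := by rw [measure_congr hS', Measure.restrict_apply_univ]
    _ = ∑ y ∈ S, μ (E ∩ W ⁻¹' {y}) := by
      rw [← sum_measure_preimage_singleton S hfiber]
      refine Finset.sum_congr rfl fun y hy => ?_
      rw [Measure.restrict_apply (hfiber y hy), Set.inter_comm]

section DoubleSample

variable {Ω : Type*} {n : ℕ} {X Y Z : Fin n → Ω → ℝ}

def stackedSamples (X Y Z : Fin n → Ω → ℝ) (q : Fin 3 × Fin n) : Ω → ℝ :=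
  ![X, Y, Z] q.1 q.2

/-- The sample inspected at arrival position `s` when the candidate under consideration arrives
at position `t`: the observed value `X` of an earlier arrival, the fresh copy `Z` otherwise. -/
def arrivalIndex (σ : Equiv.Perm (Fin n)) (t s : Fin n) : Fin 3 × Fin n :=
  (if s < t then 0 else 2, σ s)

def sampleBelow (X Z : Fin n → Ω → ℝ) (σ : Equiv.Perm (Fin n)) (i : Fin n) (y : ℝ) : Set Ω :=
  {ω | (∀ s, s < σ.symm i → X (σ s) ω < y) ∧ (∀ s, σ.symm i ≤ s → Z (σ s) ω < y)}

def hireEvent (X Z : Fin n → Ω → ℝ) (Ystar : Ω → ℝ) (σ : Equiv.Perm (Fin n)) (i : Fin n) :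
    Set Ω :=
  {ω | Ystar ω < X i ω ∧ ω ∈ sampleBelow X Z σ i (Ystar ω)}

theorem arrivalIndex_injective (σ : Equiv.Perm (Fin n)) (t : Fin n) :
    (arrivalIndex σ t).Injective :=
  fun _ _ h => σ.injective (congrArg Prod.snd h)

theorem stackedSamples_arrivalIndex (σ : Equiv.Perm (Fin n)) (t s : Fin n) :
    stackedSamples X Y Z (arrivalIndex σ t s) = if s < t then X (σ s) else Z (σ s) := by
  by_cases hs : s < t <;> simp [stackedSamples, arrivalIndex, hs]

theorem sampleBelow_eq_setOf_forall (σ : Equiv.Perm (Fin n)) (i : Fin n) (y : ℝ) :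
    sampleBelow X Z σ i y =
      {ω | ∀ s, stackedSamples X Y Z (arrivalIndex σ (σ.symm i) s) ω ∈ Set.Iio y} := by
  ext ω
  simp only [sampleBelow, stackedSamples_arrivalIndex, Set.mem_ofPred_eq, Set.mem_Iio]
  refine ⟨fun ⟨hX, hZ⟩ s => ?_, fun h => ⟨fun s hs => ?_, fun s hs => ?_⟩⟩
  · by_cases hs : s < σ.symm i
    · simpa [hs] using hX s hs
    · simpa [hs] using hZ s (not_lt.1 hs)
  · simpa [hs] using h s
  · simpa [not_lt.2 hs] using h s

theorem disjoint_range_arrivalIndex (σ : Equiv.Perm (Fin n)) (i : Fin n) :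
    Disjoint {q : Fin 3 × Fin n | q = (0, i) ∨ q.1 = 1}
      (Set.range (arrivalIndex σ (σ.symm i))) := by
  refine Set.disjoint_left.2 ?_
  rintro q hq ⟨s, rfl⟩
  by_cases hs : s < σ.symm i
  · simp only [arrivalIndex, hs, if_true, Set.mem_ofPred_eq, Prod.mk.injEq] at hq
    rcases hq with ⟨-, hsi⟩ | h01
    · exact hs.ne (σ.eq_symm_apply.2 hsi)
    · exact absurd h01 (by decide)
  · simp [arrivalIndex, hs] at hq

theorem measurable_iSup_comap_stackedSamples {Ystar : Ω → ℝ}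
    (hYstar : ∀ ω, Ystar ω = ⨆ j, Y j ω) {S : Set (Fin 3 × Fin n)} (hS : ∀ j, (1, j) ∈ S) :
    Measurable[⨆ q ∈ S, Real.measurableSpace.comap (stackedSamples X Y Z q)] Ystar := by
  rw [show Ystar = fun ω => ⨆ j, Y j ω from funext hYstar]
  exact Measurable.iSup fun j => measurable_iSup_comap_of_mem (hS j)

theorem inter_hireEvent_eq {Ystar : Ω → ℝ} (σ : Equiv.Perm (Fin n)) (i : Fin n) (x y : ℝ) :
    {ω | X i ω = x} ∩ {ω | Ystar ω = y} ∩ hireEvent X Z Ystar σ i =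
      if y < x then {ω | X i ω = x} ∩ {ω | Ystar ω = y} ∩ sampleBelow X Z σ i y else ∅ := by
  split_ifs with hxy
  · ext ω
    simp only [hireEvent, Set.mem_inter_iff, Set.mem_ofPred_eq]
    constructor
    · rintro ⟨⟨rfl, rfl⟩, -, hs⟩
      exact ⟨⟨rfl, rfl⟩, hs⟩
    · rintro ⟨⟨rfl, rfl⟩, hs⟩
      exact ⟨⟨rfl, rfl⟩, hxy, hs⟩
  · refine Set.eq_empty_iff_forall_notMem.2 ?_
    rintro ω ⟨⟨rfl, rfl⟩, hlt, -⟩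
    exact hxy hlt

variable [MeasurableSpace Ω] {μ : Measure Ω}

theorem measurable_stackedSamples (hmX : ∀ i, Measurable (X i)) (hmY : ∀ i, Measurable (Y i))
    (hmZ : ∀ i, Measurable (Z i)) (q : Fin 3 × Fin n) : Measurable (stackedSamples X Y Z q) := by
  obtain ⟨a, j⟩ := q
  fin_cases a
  exacts [hmX j, hmY j, hmZ j]

theorem measure_sampleBelow (hindep : iIndepFun (stackedSamples X Y Z) μ)
    (hidZ : ∀ i, IdentDistrib (X i) (Z i) μ μ) (σ : Equiv.Perm (Fin n)) (i : Fin n) (y : ℝ) :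
    μ (sampleBelow X Z σ i y) = ∏ j, μ {ω | X j ω < y} := by
  rw [sampleBelow_eq_setOf_forall (Y := Y),
    hindep.measure_forall_mem_eq_prod (arrivalIndex_injective σ _) measurableSet_Iio,
    ← Equiv.prod_comp σ fun j => μ {ω | X j ω < y}]
  refine Finset.prod_congr rfl fun s _ => ?_
  rw [stackedSamples_arrivalIndex]
  split_ifs
  · rfl
  · exact ((hidZ (σ s)).measure_mem_eq measurableSet_Iio).symm

theorem measure_X_eq_inter_Ystar_eq (hindep : iIndepFun (stackedSamples X Y Z) μ)
    (hmX : ∀ i, Measurable (X i)) (hmY : ∀ i, Measurable (Y i)) (hmZ : ∀ i, Measurable (Z i))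
    {Ystar : Ω → ℝ} (hYstar : ∀ ω, Ystar ω = ⨆ j, Y j ω) (i : Fin n) (x y : ℝ) :
    μ ({ω | X i ω = x} ∩ {ω | Ystar ω = y}) = μ {ω | X i ω = x} * μ {ω | Ystar ω = y} :=
  hindep.measure_inter_eq_mul_of_disjoint (measurable_stackedSamples hmX hmY hmZ)
    (S := {(0, i)}) (T := {q | q.1 = 1}) (by simp)
    (measurable_iSup_comap_of_mem (f := stackedSamples X Y Z) (S := {(0, i)}) rfl
      (measurableSet_singleton x))
    (measurable_iSup_comap_stackedSamples hYstar (fun _ => rfl) (measurableSet_singleton y))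

theorem measure_inter_sampleBelow (hindep : iIndepFun (stackedSamples X Y Z) μ)
    (hmX : ∀ i, Measurable (X i)) (hmY : ∀ i, Measurable (Y i)) (hmZ : ∀ i, Measurable (Z i))
    {Ystar : Ω → ℝ} (hYstar : ∀ ω, Ystar ω = ⨆ j, Y j ω)
    (σ : Equiv.Perm (Fin n)) (i : Fin n) (x y : ℝ) :
    μ ({ω | X i ω = x} ∩ {ω | Ystar ω = y} ∩ sampleBelow X Z σ i y) =
      μ ({ω | X i ω = x} ∩ {ω | Ystar ω = y}) * μ (sampleBelow X Z σ i y) := by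
  refine hindep.measure_inter_eq_mul_of_disjoint (measurable_stackedSamples hmX hmY hmZ)
    (disjoint_range_arrivalIndex σ i) ?_ ?_
  · exact (measurable_iSup_comap_of_mem (f := stackedSamples X Y Z)
      (S := {q | q = (0, i) ∨ q.1 = 1}) (Or.inl rfl) (measurableSet_singleton x)).inter
      (measurable_iSup_comap_stackedSamples hYstar (fun _ => Or.inr rfl)
        (measurableSet_singleton y))
  · rw [sampleBelow_eq_setOf_forall (Y := Y), Set.ofPred_forall]
    exact MeasurableSet.iInter fun s =>
      measurable_iSup_comap_of_mem (Set.mem_range_self s) measurableSet_Iio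

theorem measure_inter_hireEvent (hindep : iIndepFun (stackedSamples X Y Z) μ)
    (hidZ : ∀ i, IdentDistrib (X i) (Z i) μ μ) (hmX : ∀ i, Measurable (X i))
    (hmY : ∀ i, Measurable (Y i)) (hmZ : ∀ i, Measurable (Z i)) {Ystar : Ω → ℝ}
    (hYstar : ∀ ω, Ystar ω = ⨆ j, Y j ω) (σ : Equiv.Perm (Fin n)) (i : Fin n) (x y : ℝ) :
    μ ({ω | X i ω = x} ∩ {ω | Ystar ω = y} ∩ hireEvent X Z Ystar σ i) =
      if y < x then μ ({ω | X i ω = x} ∩ {ω | Ystar ω = y}) * ∏ j, μ {ω | X j ω < y}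
      else 0 := by
  rw [inter_hireEvent_eq]
  split_ifs
  · rw [measure_inter_sampleBelow hindep hmX hmY hmZ hYstar,
      measure_sampleBelow (Y := Y) hindep hidZ]
  · exact measure_empty

theorem measure_X_eq_inter_hireEvent_inter_Ystar_eq
    (hindep : iIndepFun (stackedSamples X Y Z) μ)
    (hidZ : ∀ i, IdentDistrib (X i) (Z i) μ μ) (hmX : ∀ i, Measurable (X i))
    (hmY : ∀ i, Measurable (Y i)) (hmZ : ∀ i, Measurable (Z i)) {Ystar : Ω → ℝ}
    (hYstar : ∀ ω, Ystar ω = ⨆ j, Y j ω)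
    (σ : Equiv.Perm (Fin n)) (i : Fin n) (x y : ℝ) :
    μ ({ω | X i ω = x} ∩ hireEvent X Z Ystar σ i ∩ Ystar ⁻¹' {y}) =
      μ {ω | X i ω = x} *
        (μ {ω | Ystar ω = y} * (∏ j, μ {ω | X j ω < y}) * if y < x then 1 else 0) := by
  rw [Set.inter_right_comm]
  change μ ({ω | X i ω = x} ∩ {ω | Ystar ω = y} ∩ hireEvent X Z Ystar σ i) = _
  rw [measure_inter_hireEvent hindep hidZ hmX hmY hmZ hYstar,
    measure_X_eq_inter_Ystar_eq hindep hmX hmY hmZ hYstar]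
  split_ifs <;> ring

end DoubleSample

theorem stmt_14_general {Ω : Type*} [MeasurableSpace Ω] (μ : Measure Ω)
    [IsProbabilityMeasure μ]
    (n : ℕ) (hn : 0 < n) (S : Finset ℝ) (X Y Z : Fin n → Ω → ℝ)
    (hmX : ∀ i, Measurable (X i)) (hmY : ∀ i, Measurable (Y i))
    (hmZ : ∀ i, Measurable (Z i))
    (hsupp : ∀ᵐ ω ∂μ, ∀ i, X i ω ∈ S ∧ Y i ω ∈ S ∧ Z i ω ∈ S)
    (hindep : iIndepFun (fun (q : Fin 3 × Fin n) => ![X, Y, Z] q.1 q.2) μ)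
    (hidZ : ∀ i, IdentDistrib (X i) (Z i) μ μ)
    (Ystar : Ω → ℝ) (hYstar : ∀ ω, Ystar ω = ⨆ i, Y i ω)
    (hire : Equiv.Perm (Fin n) → Fin n → Set Ω)
    (hhire : ∀ σ i, hire σ i =
      {ω | Ystar ω < X i ω ∧
        (∀ s : Fin n, s < σ.symm i → X (σ s) ω < Ystar ω) ∧
        (∀ s : Fin n, σ.symm i ≤ s → Z (σ s) ω < Ystar ω)}) :
    (∀ σ : Equiv.Perm (Fin n), ∀ i : Fin n, ∀ x y : ℝ, y < x →
      μ ({ω | X i ω = x} ∩ {ω | Ystar ω = y}) ≠ 0 →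
      (ProbabilityTheory.cond μ ({ω | X i ω = x} ∩ {ω | Ystar ω = y})
          (hire σ i)).toReal =
        ∏ j : Fin n, (μ {ω | X j ω < y}).toReal) ∧
    (∀ σ : Equiv.Perm (Fin n), ∀ i : Fin n, ∀ x : ℝ,
      μ {ω | X i ω = x} ≠ 0 →
      (ProbabilityTheory.cond μ {ω | X i ω = x} (hire σ i)).toReal =
        ∑ y ∈ S, (μ {ω | Ystar ω = y}).toReal *
          (∏ j : Fin n, (μ {ω | X j ω < y}).toReal) *
          (if y < x then 1 else 0)) := by
  obtain rfl : hire = hireEvent X Z Ystar := funext₂ hhire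
  replace hindep : iIndepFun (stackedSamples X Y Z) μ := hindep
  have hmYstar : Measurable Ystar := by
    rw [show Ystar = fun ω => ⨆ j, Y j ω from funext hYstar]
    exact Measurable.iSup hmY
  have : Nonempty (Fin n) := ⟨⟨0, hn⟩⟩
  have hYstar_mem : ∀ᵐ ω ∂μ, Ystar ω ∈ S := by
    simpa only [hYstar, Finset.mem_coe] using
      ae_iSup_mem_of_ae_forall_mem (Y := Y) (S := S) (hsupp.mono fun _ hω j => (hω j).2.1)
  have hmX_eq : ∀ i x, MeasurableSet {ω | X i ω = x} := fun i x =>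
    hmX i (measurableSet_singleton x)
  have hmYstar_eq : ∀ y, MeasurableSet {ω | Ystar ω = y} := fun y =>
    hmYstar (measurableSet_singleton y)
  refine ⟨fun σ i x y hxy hne => ?_, fun σ i x hne => ?_⟩
  · rw [cond_apply ((hmX_eq i x).inter (hmYstar_eq y)),
      measure_inter_hireEvent hindep hidZ hmX hmY hmZ hYstar, if_pos hxy,
      ENNReal.inv_mul_cancel_left hne (measure_ne_top _ _), ENNReal.toReal_prod]
  · rw [cond_apply (hmX_eq i x),
      measure_eq_sum_measure_inter_preimage_singleton hmYstar hYstar_mem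
        ({ω | X i ω = x} ∩ hireEvent X Z Ystar σ i),
      Finset.sum_congr rfl fun y _ => measure_X_eq_inter_hireEvent_inter_Ystar_eq
        hindep hidZ hmX hmY hmZ hYstar σ i x y,
      ← Finset.mul_sum, ENNReal.inv_mul_cancel_left hne (measure_ne_top _ _),
      ENNReal.toReal_sum fun y _ => ENNReal.mul_ne_top
        (ENNReal.mul_ne_top (measure_ne_top _ _)
          (ENNReal.prod_ne_top fun _ _ => measure_ne_top _ _))
        (by split_ifs <;> simp)]
    refine Finset.sum_congr rfl fun y _ => ?_
    split_ifs <;> simp [ENNReal.toReal_prod]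

/-- Fairness of the double-sample online algorithm (Lemma 10): conditional on
`X i = x` and `Y* = y` with `x > y`, the probability of hiring `i` equals
`∏ j Pr[X j < y]`, independent of `i` and of the arrival order; consequently
`Pr[hire i | X i = x]` equals `∑_y Pr[Y* = y]·∏ j Pr[X j < y]·1[y < x]`, the
same for every identity and every arrival ordering, so the rule is both IIF
and TIF. -/
theorem stmt_14 {Ω : Type*} [MeasurableSpace Ω] (μ : Measure Ω)
    [IsProbabilityMeasure μ]
    (n : ℕ) (hn : 0 < n) (S : Finset ℝ) (X Y Z : Fin n → Ω → ℝ)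
    (hmX : ∀ i, Measurable (X i)) (hmY : ∀ i, Measurable (Y i))
    (hmZ : ∀ i, Measurable (Z i))
    (hsupp : ∀ᵐ ω ∂μ, ∀ i, X i ω ∈ S ∧ Y i ω ∈ S ∧ Z i ω ∈ S)
    (hindep : iIndepFun (fun (q : Fin 3 × Fin n) => ![X, Y, Z] q.1 q.2) μ)
    (hidY : ∀ i, IdentDistrib (X i) (Y i) μ μ)
    (hidZ : ∀ i, IdentDistrib (X i) (Z i) μ μ)
    (Ystar : Ω → ℝ) (hYstar : ∀ ω, Ystar ω = ⨆ i, Y i ω)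
    (hire : Equiv.Perm (Fin n) → Fin n → Set Ω)
    (hhire : ∀ σ i, hire σ i =
      {ω | Ystar ω < X i ω ∧
        (∀ s : Fin n, s < σ.symm i → X (σ s) ω < Ystar ω) ∧
        (∀ s : Fin n, σ.symm i ≤ s → Z (σ s) ω < Ystar ω)}) :
    (∀ σ : Equiv.Perm (Fin n), ∀ i : Fin n, ∀ x y : ℝ, y < x →
      μ ({ω | X i ω = x} ∩ {ω | Ystar ω = y}) ≠ 0 →
      (ProbabilityTheory.cond μ ({ω | X i ω = x} ∩ {ω | Ystar ω = y})
          (hire σ i)).toReal =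
        ∏ j : Fin n, (μ {ω | X j ω < y}).toReal) ∧
    (∀ σ : Equiv.Perm (Fin n), ∀ i : Fin n, ∀ x : ℝ,
      μ {ω | X i ω = x} ≠ 0 →
      (ProbabilityTheory.cond μ {ω | X i ω = x} (hire σ i)).toReal =
        ∑ y ∈ S, (μ {ω | Ystar ω = y}).toReal *
          (∏ j : Fin n, (μ {ω | X j ω < y}).toReal) *
          (if y < x then 1 else 0)) :=
  stmt_14_general μ n hn S X Y Z hmX hmY hmZ hsupp hindep hidZ Ystar hYstar hire hhire
end

section
/- Let X_1, …, X_n be independent nonnegative discrete random variables with pmfs f_i on finite S, and let A be a selection procedure satisfying Pr[A selects i | X_i = x] = p(x) for all i and x (IIF with probability function p). Then the expected value of the selected candidate equals ∑_{i=1}^n ∑_{x∈S} x·f_i(x)·p(x). In particular, all IIF selection rules with the same probability function p have the same expected performance. -/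
/-!
The selected value is `∑ i, 1[H i] · X i`, and on `{X i = x} ∩ H i` the `i`-th summand is the
constant `x`. Hence its expectation is `∑ x, x · μ({X i = x} ∩ H i)`, and
`μ({X i = x} ∩ H i) = μ{X i = x} · μ[H i | X i = x] = f_i(x) · p(x)` by the IIF property.
-/

open Finset MeasureTheory ProbabilityTheory

section

variable {Ω : Type*} [MeasurableSpace Ω]

theorem integral_eq_sum_mul_measureReal_of_ae_mem {ν : Measure Ω} [IsFiniteMeasure ν]
    {f : Ω → ℝ} (hf : Measurable f) {S : Finset ℝ} (hS : ∀ᵐ ω ∂ν, f ω ∈ S) :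
    ∫ ω, f ω ∂ν = ∑ x ∈ S, x * ν.real {ω | f ω = x} := by
  have hconc : (ν.map f).restrict S = ν.map f :=
    Measure.restrict_eq_self_of_ae_mem ((ae_map_iff hf.aemeasurable S.measurableSet).2 hS)
  rw [← integral_map (f := fun x => x) hf.aemeasurable aestronglyMeasurable_id, ← hconc,
    setIntegral_finset S (IntegrableOn.of_finite S.finite_toSet)]
  refine Finset.sum_congr rfl fun x _ => ?_
  rw [map_measureReal_apply hf (measurableSet_singleton x), smul_eq_mul, mul_comm]
  rfl

theorem integrable_of_ae_mem_finset {ν : Measure Ω} [IsFiniteMeasure ν]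
    {f : Ω → ℝ} (hf : Measurable f) {S : Finset ℝ} (hS : ∀ᵐ ω ∂ν, f ω ∈ S) :
    Integrable f ν :=
  .of_bound hf.aestronglyMeasurable (∑ x ∈ S, ‖x‖) <| hS.mono fun _ hω =>
    Finset.single_le_sum (f := fun x => ‖x‖) (fun _ _ => norm_nonneg _) hω

theorem measureReal_inter_eq_mul_cond (μ : Measure Ω) [IsFiniteMeasure μ] {s : Set Ω}
    (hs : MeasurableSet s) (t : Set Ω) :
    μ.real (s ∩ t) = μ.real s * (μ[t | s]).toReal := by
  rw [measureReal_def, ← cond_mul_eq_inter hs, ENNReal.toReal_mul, mul_comm, measureReal_def]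

end

theorem stmt_16_general {Ω : Type*} [MeasurableSpace Ω] (μ : Measure Ω)
    [IsProbabilityMeasure μ]
    (n : ℕ) (S : Finset ℝ)
    (X : Fin n → Ω → ℝ) (hmX : ∀ i, Measurable (X i))
    (hsupp : ∀ᵐ ω ∂μ, ∀ i, X i ω ∈ S)
    (H : Fin n → Set Ω) (hmH : ∀ i, MeasurableSet (H i))
    (p : ℝ → ℝ)
    (hIIF : ∀ i : Fin n, ∀ x ∈ S,
      (ProbabilityTheory.cond μ {ω | X i ω = x} (H i)).toReal = p x) :
    ∫ ω, ∑ i : Fin n, Set.indicator (H i) (X i) ω ∂μ =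
      ∑ i : Fin n, ∑ x ∈ S, x * (μ {ω | X i ω = x}).toReal * p x := by
  have hmem : ∀ i, ∀ᵐ ω ∂μ, X i ω ∈ S := fun i => hsupp.mono fun _ h => h i
  rw [integral_finsetSum _ fun i _ =>
    (integrable_of_ae_mem_finset (hmX i) (hmem i)).indicator (hmH i)]
  refine Finset.sum_congr rfl fun i _ => ?_
  rw [integral_indicator (hmH i),
    integral_eq_sum_mul_measureReal_of_ae_mem (hmX i) (ae_restrict_of_ae (hmem i))]
  refine Finset.sum_congr rfl fun x hx => ?_
  have hlevel : MeasurableSet {ω | X i ω = x} := hmX i (measurableSet_singleton x)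
  rw [measureReal_restrict_apply hlevel, measureReal_inter_eq_mul_cond μ hlevel, hIIF i x hx,
    measureReal_def, mul_assoc]

/-- IIF objective lemma (Lemma 1): any selection procedure that is IIF with
probability function `p` has expected selected value
`∑ i ∑ x x·f_i(x)·p(x)`; in particular this depends only on `p`. -/
theorem stmt_16 {Ω : Type*} [MeasurableSpace Ω] (μ : Measure Ω)
    [IsProbabilityMeasure μ]
    (n : ℕ) (S : Finset ℝ) (hS : ∀ x ∈ S, 0 ≤ x)
    (X : Fin n → Ω → ℝ) (hmX : ∀ i, Measurable (X i))
    (hsupp : ∀ᵐ ω ∂μ, ∀ i, X i ω ∈ S)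
    (hindep : iIndepFun X μ)
    (H : Fin n → Set Ω) (hmH : ∀ i, MeasurableSet (H i))
    (hdisj : ∀ i j, i ≠ j → Disjoint (H i) (H j))
    (p : ℝ → ℝ)
    (hIIF : ∀ i : Fin n, ∀ x ∈ S,
      (ProbabilityTheory.cond μ {ω | X i ω = x} (H i)).toReal = p x) :
    ∫ ω, ∑ i : Fin n, Set.indicator (H i) (X i) ω ∂μ =
      ∑ i : Fin n, ∑ x ∈ S, x * (μ {ω | X i ω = x}).toReal * p x :=
  stmt_16_general μ n S X hmX hsupp H hmH p hIIF
end

section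
/- There is a two-variable instance witnessing tightness of the factor 1/2 for online IIF versus optimal online: with X_1 ≡ 1 and X_2 equal to 1 with probability ε and 0 otherwise (arrival order X_1 then X_2), the optimal unconstrained stopping rule achieves expected value 1, while every feasible solution p of the online IIF LP — maximize (1+ε)·p(1) subject to p(0)+p(1) ≤ 1 and 2·p(1) ≤ 1, p(0),p(1) ∈ [0,1] — has objective at most (1+ε)/2. -/
/-- Tightness of the factor 1/2 for online IIF vs. optimal online
(IIF Right Arc): in the instance `X₁ ≡ 1`, `X₂ = 1` w.p. `ε` and `0`
otherwise, every stopping rule achieves at most `1`, the rule hiring the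
first candidate achieves exactly `1`, while every feasible solution of the
online IIF LP has objective at most `(1+ε)/2`. -/
theorem stmt_17 :
    ∀ ε : ℝ, 0 < ε → ε < 1 →
      (∀ a b : ℝ, 0 ≤ a → a ≤ 1 → 0 ≤ b → b ≤ 1 →
        a * 1 + (1 - a) * (ε * b) ≤ 1) ∧
      (∃ a b : ℝ, 0 ≤ a ∧ a ≤ 1 ∧ 0 ≤ b ∧ b ≤ 1 ∧
        a * 1 + (1 - a) * (ε * b) = 1) ∧
      (∀ p0 p1 : ℝ, 0 ≤ p0 → p0 ≤ 1 → 0 ≤ p1 → p1 ≤ 1 →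
        p0 + p1 ≤ 1 → p1 + p1 ≤ 1 →
        (1 + ε) * p1 ≤ (1 + ε) / 2) := by
  intro ε hε hε1
  refine ⟨?_, ⟨1, 0, by norm_num⟩, ?_⟩
  · intro a b ha ha1 hb hb1
    nlinarith [mul_nonneg (sub_nonneg.2 ha1) (mul_nonneg hε.le hb),
      mul_nonneg (sub_nonneg.2 ha1) (mul_nonneg hε.le (sub_nonneg.2 hb1))]
  · intro p0 p1 _ _ _ _ _ h
    nlinarith
end
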